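/- arXiv:2207.13982 — 6 statements merged into one kernel-verified Lean document; each statement's English description precedes it below -/
import Mathlib

section
/- Let V be a finite set, let K be a positive integer, and let 𝓕 be a family of subsets of V each of which has at most K elements. Define μ(p) := Pr(B ⊆ V_p for some B ∈ 𝓕). Then for every c ∈ (0,1) and every p ∈ [0,1], μ(c·p) ≥ c^K·μ(p). -/
open Filter

open Finset in
private lemma total_mass {α : Type*} [DecidableEq α] (Y : Finset α) (c : ℝ) :
    ∑ T ∈ Y.powerset, c ^ T.card * (1 - c) ^ (Y.card - T.card) = 1 := by
  induction Y using Finset.induction_on with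
  | empty => simp
  | @insert a Y ha ih =>
    rw [Finset.sum_powerset_insert ha]
    have h1 : ∀ T ∈ Y.powerset, c ^ T.card * (1-c) ^ ((insert a Y).card - T.card)
        = (1-c) * (c ^ T.card * (1-c) ^ (Y.card - T.card)) := by
      intro T hT
      rw [mem_powerset] at hT
      rw [card_insert_of_notMem ha, Nat.succ_sub (card_le_card hT), pow_succ]
      ring
    have h2 : ∀ T ∈ Y.powerset, c ^ (insert a T).card * (1-c) ^ ((insert a Y).card - (insert a T).card)
        = c * (c ^ T.card * (1-c) ^ (Y.card - T.card)) := by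
      intro T hT
      rw [mem_powerset] at hT
      rw [card_insert_of_notMem ha, card_insert_of_notMem (fun h => ha (hT h)),
        Nat.succ_sub_succ, pow_succ]
      ring
    rw [Finset.sum_congr rfl h1, Finset.sum_congr rfl h2, ← mul_sum, ← mul_sum, ih]
    ring

open Finset in
private lemma contain_prob {α : Type*} [DecidableEq α] (X B : Finset α) (hB : B ⊆ X) (c : ℝ) :
    ∑ T ∈ X.powerset, (if B ⊆ T then c ^ T.card * (1 - c) ^ (X.card - T.card) else 0)
      = c ^ B.card := by
  rw [Finset.sum_ite, Finset.sum_const_zero, add_zero]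
  have himg : X.powerset.filter (fun T => B ⊆ T) = (X \ B).powerset.image (fun T => B ∪ T) := by
    ext T
    simp only [mem_filter, mem_powerset, mem_image]
    constructor
    · rintro ⟨hTX, hBT⟩
      exact ⟨T \ B, sdiff_subset_sdiff hTX subset_rfl,
        by rw [Finset.union_sdiff_of_subset hBT]⟩
    · rintro ⟨T', hT', rfl⟩
      exact ⟨union_subset hB (hT'.trans (sdiff_subset)), subset_union_left⟩
  rw [himg, Finset.sum_image]
  · have hpt : ∀ T ∈ (X \ B).powerset, c ^ (B ∪ T).card * (1 - c) ^ (X.card - (B ∪ T).card)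
        = c ^ B.card * (c ^ T.card * (1 - c) ^ ((X \ B).card - T.card)) := by
      intro T hT
      rw [mem_powerset] at hT
      have hdisj : Disjoint B T := by
        refine Finset.disjoint_left.mpr fun x hxB hxT => ?_
        exact (mem_sdiff.mp (hT hxT)).2 hxB
      rw [card_union_of_disjoint hdisj, card_sdiff_of_subset hB, pow_add, Nat.sub_add_eq]
      ring
    rw [Finset.sum_congr rfl hpt, ← mul_sum, total_mass, mul_one]
  · intro T1 h1 T2 h2 heq
    rw [mem_coe, mem_powerset] at h1 h2
    have d1 : T1 = (B ∪ T1) \ B := by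
      rw [Finset.union_sdiff_left]
      exact (Finset.sdiff_eq_self_of_disjoint (Finset.disjoint_left.mpr
        fun x hx hxB => (mem_sdiff.mp (h1 hx)).2 hxB)).symm
    have d2 : T2 = (B ∪ T2) \ B := by
      rw [Finset.union_sdiff_left]
      exact (Finset.sdiff_eq_self_of_disjoint (Finset.disjoint_left.mpr
        fun x hx hxB => (mem_sdiff.mp (h2 hx)).2 hxB)).symm
    rw [d1, d2, show B ∪ T1 = B ∪ T2 from heq]

open Finset in
private lemma conv_lemma {α : Type*} [DecidableEq α] (X : Finset α) (p q : ℝ) :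
    ∀ f : Finset α → ℝ,
    (∑ S ∈ X.powerset, ∑ T ∈ X.powerset,
      p ^ S.card * (1 - p) ^ (X.card - S.card) *
        (q ^ T.card * (1 - q) ^ (X.card - T.card)) * f (S ∩ T))
      = ∑ U ∈ X.powerset, (p * q) ^ U.card * (1 - p * q) ^ (X.card - U.card) * f U := by
  induction X using Finset.induction_on with
  | empty => intro f; simp
  | @insert a X ha ih =>
    intro f
    set g : Finset α → ℝ := fun U => (1 - p * q) * f U + p * q * f (insert a U) with hg
    have lhs_eq : (∑ S ∈ (insert a X).powerset, ∑ T ∈ (insert a X).powerset,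
        p ^ S.card * (1 - p) ^ ((insert a X).card - S.card) *
          (q ^ T.card * (1 - q) ^ ((insert a X).card - T.card)) * f (S ∩ T))
        = ∑ S ∈ X.powerset, ∑ T ∈ X.powerset,
          p ^ S.card * (1 - p) ^ (X.card - S.card) *
            (q ^ T.card * (1 - q) ^ (X.card - T.card)) * g (S ∩ T) := by
      rw [Finset.sum_powerset_insert ha, ← Finset.sum_add_distrib]
      refine Finset.sum_congr rfl fun S hS => ?_
      rw [mem_powerset] at hS
      have haS : a ∉ S := fun h => ha (hS h)
      simp only [Finset.sum_powerset_insert ha]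
      rw [← Finset.sum_add_distrib, ← Finset.sum_add_distrib, ← Finset.sum_add_distrib]
      refine Finset.sum_congr rfl fun T hT => ?_
      rw [mem_powerset] at hT
      have haT : a ∉ T := fun h => ha (hT h)
      have e1 : S ∩ insert a T = S ∩ T := by
        rw [Finset.inter_comm, Finset.insert_inter_of_notMem haS, Finset.inter_comm]
      have e2 : insert a S ∩ T = S ∩ T := Finset.insert_inter_of_notMem haT
      have e3 : insert a S ∩ insert a T = insert a (S ∩ T) :=
        (Finset.insert_inter_distrib S T a).symm
      have c1 : (insert a X).card = X.card + 1 := card_insert_of_notMem ha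
      have c2 : (insert a S).card = S.card + 1 := card_insert_of_notMem haS
      have c3 : (insert a T).card = T.card + 1 := card_insert_of_notMem haT
      have d1 : X.card + 1 - S.card = (X.card - S.card) + 1 := Nat.succ_sub (card_le_card hS)
      have d2 : X.card + 1 - T.card = (X.card - T.card) + 1 := Nat.succ_sub (card_le_card hT)
      rw [e1, e2, e3, c1, c2, c3, d1, d2, Nat.succ_sub_succ, Nat.succ_sub_succ, hg]
      simp only [Nat.succ_eq_add_one, pow_succ]
      ring
    rw [lhs_eq, ih g, Finset.sum_powerset_insert ha, ← Finset.sum_add_distrib]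
    refine Finset.sum_congr rfl fun U hU => ?_
    rw [mem_powerset] at hU
    have haU : a ∉ U := fun h => ha (hU h)
    rw [card_insert_of_notMem ha, card_insert_of_notMem haU,
      Nat.succ_sub (card_le_card hU), Nat.succ_sub_succ, hg]
    simp only [Nat.succ_eq_add_one, pow_succ]
    ring

open Classical in
/-- The probability that the binomial random subset of the finite set `X`,
in which each element is retained independently with probability `p`,
satisfies the predicate `P`. -/
noncomputable def probSub {α : Type*} (X : Finset α) (p : ℝ) (P : Finset α → Prop) : ℝ :=
  ∑ S ∈ X.powerset, if P S then p ^ S.card * (1 - p) ^ (X.card - S.card) else 0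

/-- **Local coarseness.** If every member of `𝓕` has at most `K` elements and
`μ(p)` denotes the probability that the binomial random subset `V_p` contains a
member of `𝓕`, then `μ(c·p) ≥ c^K · μ(p)` for every `c ∈ (0,1)`. -/
theorem local_coarseness {V : Type*} [Fintype V] (K : ℕ) (hK : 0 < K)
    (F : Set (Finset V)) (hF : ∀ B ∈ F, B.card ≤ K)
    (c : ℝ) (hc : c ∈ Set.Ioo (0 : ℝ) 1) (p : ℝ) (hp : p ∈ Set.Icc (0 : ℝ) 1) :
    c ^ K * probSub Finset.univ p (fun S => ∃ B ∈ F, B ⊆ S) ≤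
      probSub Finset.univ (c * p) (fun S => ∃ B ∈ F, B ⊆ S) := by
  classical
  obtain ⟨hc0, hc1⟩ := hc
  obtain ⟨hp0, hp1⟩ := hp
  set P : Finset V → Prop := fun S => ∃ B ∈ F, B ⊆ S with hPdef
  set f : Finset V → ℝ := fun S => if P S then (1:ℝ) else 0 with hf
  have hf0 : ∀ U, 0 ≤ f U := by
    intro U; by_cases h : P U <;> simp [hf, h]
  have hf1 : ∀ U, P U → f U = 1 := by
    intro U h; simp [hf, h]
  have hprob : ∀ r : ℝ, probSub Finset.univ r P
      = ∑ U ∈ (Finset.univ : Finset V).powerset,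
          r ^ U.card * (1 - r) ^ ((Finset.univ : Finset V).card - U.card) * f U := by
    intro r
    unfold probSub
    refine Finset.sum_congr rfl fun S _ => ?_
    by_cases h : P S
    · simp [hf, h]
    · simp [hf, h]
  rw [hprob, hprob, mul_comm c p, ← conv_lemma Finset.univ p c f, Finset.mul_sum]
  refine Finset.sum_le_sum fun S _ => ?_
  have hwS : (0:ℝ) ≤ p ^ S.card * (1 - p) ^ ((Finset.univ : Finset V).card - S.card) :=
    mul_nonneg (pow_nonneg hp0 _) (pow_nonneg (by linarith) _)
  have hwT : ∀ T : Finset V,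
      (0:ℝ) ≤ c ^ T.card * (1 - c) ^ ((Finset.univ : Finset V).card - T.card) :=
    fun T => mul_nonneg (pow_nonneg hc0.le _) (pow_nonneg (by linarith) _)
  by_cases h : P S
  · obtain ⟨B, hBF, hBS⟩ := h
    have hcK : c ^ K ≤ c ^ B.card := pow_le_pow_of_le_one hc0.le hc1.le (hF B hBF)
    calc c ^ K * (p ^ S.card * (1 - p) ^ ((Finset.univ : Finset V).card - S.card) * f S)
        = p ^ S.card * (1 - p) ^ ((Finset.univ : Finset V).card - S.card) * c ^ K := by
          rw [hf1 S ⟨B, hBF, hBS⟩]; ring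
      _ ≤ p ^ S.card * (1 - p) ^ ((Finset.univ : Finset V).card - S.card) * c ^ B.card :=
          mul_le_mul_of_nonneg_left hcK hwS
      _ = p ^ S.card * (1 - p) ^ ((Finset.univ : Finset V).card - S.card) *
            (∑ T ∈ (Finset.univ : Finset V).powerset,
              (if B ⊆ T then c ^ T.card * (1 - c) ^ ((Finset.univ : Finset V).card - T.card)
                else 0)) := by
          rw [contain_prob Finset.univ B (Finset.subset_univ B) c]
      _ = ∑ T ∈ (Finset.univ : Finset V).powerset,
            p ^ S.card * (1 - p) ^ ((Finset.univ : Finset V).card - S.card) *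
              (if B ⊆ T then c ^ T.card * (1 - c) ^ ((Finset.univ : Finset V).card - T.card)
                else 0) := Finset.mul_sum _ _ _
      _ ≤ ∑ T ∈ (Finset.univ : Finset V).powerset,
            p ^ S.card * (1 - p) ^ ((Finset.univ : Finset V).card - S.card) *
              (c ^ T.card * (1 - c) ^ ((Finset.univ : Finset V).card - T.card)) * f (S ∩ T) := by
          refine Finset.sum_le_sum fun T _ => ?_
          by_cases hBT : B ⊆ T
          · have : P (S ∩ T) := ⟨B, hBF, Finset.subset_inter hBS hBT⟩
            rw [if_pos hBT, hf1 _ this, mul_one, mul_assoc]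
          · rw [if_neg hBT, mul_zero]
            exact mul_nonneg (mul_nonneg hwS (hwT T)) (hf0 _)
  · have : f S = 0 := by simp [hf, h]
    rw [this, mul_zero, mul_zero]
    refine Finset.sum_nonneg fun T _ => mul_nonneg (mul_nonneg hwS (hwT T)) (hf0 _)
end

section
/- Let 𝓖 be a multihypergraph on a finite vertex set V and let t and m be positive integers. Then there exists a sub-multiset 𝓖' of the edges of 𝓖 such that e(𝓖') ≥ e(𝓖) − m and Δ_t(𝓖') ≤ (1/m)·Σ_{T ⊆ V, |T| = t} deg_𝓖(T)². -/
/-!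
Call a `t`-set `T` heavy if `m · deg T` exceeds `N = Σ_{|T'| = t} deg T'²`, and delete every edge
containing a heavy set. Each heavy `T` satisfies `deg T · (N + 1) ≤ m · deg T²`, so summing over the
heavy sets gives `Σ_{heavy} deg T ≤ m`: at most `m` edges are deleted. Heavy sets have degree `0`
afterwards, and the other `t`-sets already had degree at most `N / m`.
-/

namespace Multiset

variable {α β : Type*}

theorem card_filter_or_le (s : Multiset α) (p q : α → Prop) [DecidablePred p] [DecidablePred q] :
    card (s.filter fun a => p a ∨ q a) ≤ card (s.filter p) + card (s.filter q) := by
  rw [← card_add, filter_add_filter]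
  exact card_le_card (le_add_right _ _)

theorem card_filter_exists_le_sum [DecidableEq β] (s : Multiset α) (B : Finset β)
    (r : β → α → Prop) [∀ b, DecidablePred (r b)] :
    card (s.filter fun a => ∃ b ∈ B, r b a) ≤ ∑ b ∈ B, card (s.filter (r b)) := by
  induction B using Finset.induction_on with
  | empty => simp
  | insert b B hb ih =>
    simp only [Finset.mem_insert, exists_eq_or_imp, Finset.sum_insert hb]
    exact (card_filter_or_le s _ _).trans (Nat.add_le_add_left ih _)

theorem card_le_card_filter_forall_not_add_sum [DecidableEq β] (s : Multiset α) (B : Finset β)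
    (r : β → α → Prop) [∀ b, DecidablePred (r b)] [DecidablePred fun a => ∀ b ∈ B, ¬ r b a] :
    card s ≤ card (s.filter fun a => ∀ b ∈ B, ¬ r b a) + ∑ b ∈ B, card (s.filter (r b)) := by
  conv_lhs => rw [← filter_add_not (fun a => ∀ b ∈ B, ¬ r b a) s, card_add]
  refine Nat.add_le_add_left (le_of_eq_of_le ?_ (card_filter_exists_le_sum s B r)) _
  simp only [not_forall, not_not, exists_prop]

end Multiset

theorem Finset.sum_filter_sum_sq_lt_mul_le {ι : Type*} (s : Finset ι) (f : ι → ℕ) (m : ℕ) :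
    ∑ i ∈ s with ∑ j ∈ s, f j ^ 2 < m * f i, f i ≤ m := by
  set N := ∑ j ∈ s, f j ^ 2
  refine Nat.le_of_mul_le_mul_right ?_ N.succ_pos
  calc (∑ i ∈ s with N < m * f i, f i) * (N + 1)
      = ∑ i ∈ s with N < m * f i, f i * (N + 1) := Finset.sum_mul _ _ _
    _ ≤ ∑ i ∈ s with N < m * f i, m * f i ^ 2 := by
        refine Finset.sum_le_sum fun i hi => ?_
        have heavy : N + 1 ≤ m * f i := (Finset.mem_filter.1 hi).2
        calc f i * (N + 1) ≤ f i * (m * f i) := Nat.mul_le_mul_left _ heavy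
          _ = m * f i ^ 2 := by ring
    _ = m * ∑ i ∈ s with N < m * f i, f i ^ 2 := (Finset.mul_sum _ _ _).symm
    _ ≤ m * (N + 1) := by
        gcongr
        exact (Finset.sum_le_sum_of_subset (Finset.filter_subset _ _)).trans N.le_succ

theorem hypergraph_cleanup_l2_linf_general {V : Type*} [Fintype V] [DecidableEq V]
    (G : Multiset (Finset V)) (t m : ℕ) (hm : 0 < m) :
    ∃ G' : Multiset (Finset V), G' ≤ G ∧
      (Multiset.card G : ℝ) - m ≤ (Multiset.card G' : ℝ) ∧
      ∀ T : Finset V, T.card = t →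
        ((Multiset.card (G'.filter fun e => T ⊆ e) : ℝ)) ≤
          (1 / (m : ℝ)) * ∑ T' ∈ Finset.univ.filter (fun T' : Finset V => T'.card = t),
            (Multiset.card (G.filter fun e => T' ⊆ e) : ℝ) ^ 2 := by
  set deg : Finset V → ℕ := fun T => Multiset.card (G.filter fun e => T ⊆ e)
  set S := Finset.univ.filter fun T : Finset V => T.card = t
  set N := ∑ T ∈ S, deg T ^ 2
  set heavy := S.filter fun T => N < m * deg T
  set G' := G.filter fun e => ∀ T ∈ heavy, ¬ T ⊆ e
  have deleted : ∑ T ∈ heavy, deg T ≤ m := Finset.sum_filter_sum_sq_lt_mul_le S deg m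
  have hcard : Multiset.card G ≤ Multiset.card G' + m :=
    calc Multiset.card G ≤ Multiset.card G' + ∑ T ∈ heavy, deg T :=
          G.card_le_card_filter_forall_not_add_sum heavy (· ⊆ ·)
      _ ≤ Multiset.card G' + m := Nat.add_le_add_left deleted _
  have hdeg : ∀ T ∈ S, m * Multiset.card (G'.filter fun e => T ⊆ e) ≤ N := by
    intro T hT
    by_cases hTheavy : T ∈ heavy
    · have : G'.filter (fun e => T ⊆ e) = 0 :=
        Multiset.filter_eq_nil.2 fun e he => (Multiset.mem_filter.1 he).2 T hTheavy
      simp [this]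
    · have hlight : m * deg T ≤ N := by simpa [heavy, hT] using hTheavy
      refine le_trans (Nat.mul_le_mul_left _ (Multiset.card_le_card ?_)) hlight
      exact Multiset.filter_le_filter _ (Multiset.filter_le _ _)
  refine ⟨G', Multiset.filter_le _ _, ?_, fun T hT => ?_⟩
  · have : (Multiset.card G : ℝ) ≤ Multiset.card G' + m := by exact_mod_cast hcard
    linarith
  · rw [one_div_mul_eq_div, le_div_iff₀' (by exact_mod_cast hm)]
    exact_mod_cast hdeg T (by simpa [S] using hT)

/-- **Degree trimming for multihypergraphs.** From any multihypergraph `G` one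
can delete at most `m` edges so that in the remaining multihypergraph every
`t`-element vertex set has degree at most `(1/m)·Σ_{|T|=t} deg_G(T)²`. -/
theorem hypergraph_cleanup_l2_linf {V : Type*} [Fintype V] [DecidableEq V]
    (G : Multiset (Finset V)) (t m : ℕ) (ht : 0 < t) (hm : 0 < m) :
    ∃ G' : Multiset (Finset V), G' ≤ G ∧
      (Multiset.card G : ℝ) - m ≤ (Multiset.card G' : ℝ) ∧
      ∀ T : Finset V, T.card = t →
        ((Multiset.card (G'.filter fun e => T ⊆ e) : ℝ)) ≤
          (1 / (m : ℝ)) * ∑ T' ∈ Finset.univ.filter (fun T' : Finset V => T'.card = t),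
            (Multiset.card (G.filter fun e => T' ⊆ e) : ℝ) ^ 2 :=
  hypergraph_cleanup_l2_linf_general G t m hm
end

section
/- Let F and G be finite simple graphs with G having at least one vertex, and let k be a positive integer. Then hom(F^{(k)}, G) ≥ hom(F, G)^{k^{v(F)}}, where v(F) is the number of vertices of F. -/
/-- The homomorphism density of `F` in `G`: the proportion of all maps
`V(F) → V(G)` that are graph homomorphisms. -/
noncomputable def homDensity {α β : Type*} [Fintype α] [Fintype β]
    (F : SimpleGraph α) (G : SimpleGraph β) : ℝ :=
  (Nat.card (F →g G) : ℝ) / (Fintype.card β : ℝ) ^ (Fintype.card α)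

/-- The `k`-blowup of `F`: vertices `V(F) × Fin k`, with `(a,i)` adjacent to
`(b,j)` iff `ab` is an edge of `F`. -/
def blowup {α : Type*} (F : SimpleGraph α) (k : ℕ) : SimpleGraph (α × Fin k) :=
  SimpleGraph.comap Prod.fst F

set_option maxHeartbeats 1600000

namespace BlowupAux

open Finset

open Classical in
/-- Real-valued indicator of a proposition. -/
noncomputable def ind (p : Prop) : ℝ := if p then 1 else 0

lemma ind_true {p : Prop} (h : p) : ind p = 1 := by simp [ind, h]

lemma ind_false {p : Prop} (h : ¬ p) : ind p = 0 := by simp [ind, h]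

lemma ind_nonneg (p : Prop) : 0 ≤ ind p := by
  by_cases h : p
  · rw [ind_true h]; norm_num
  · rw [ind_false h]

lemma ind_congr {p q : Prop} (h : p ↔ q) : ind p = ind q := by
  by_cases hp : p
  · rw [ind_true hp, ind_true (h.mp hp)]
  · rw [ind_false hp, ind_false (fun hq => hp (h.mpr hq))]

lemma ind_and (p q : Prop) : ind (p ∧ q) = ind p * ind q := by
  by_cases hp : p <;> by_cases hq : q
  · rw [ind_true (And.intro hp hq), ind_true hp, ind_true hq]; norm_num
  · rw [ind_false (fun h => hq h.2), ind_false hq]; ring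
  · rw [ind_false (fun h => hp h.1), ind_false hp]; ring
  · rw [ind_false (fun h => hp h.1), ind_false hp]; ring

lemma ind_forall {ι : Type*} [Fintype ι] (p : ι → Prop) :
    ind (∀ i, p i) = ∏ i, ind (p i) := by
  by_cases h : ∀ i, p i
  · rw [ind_true h, eq_comm]
    exact Finset.prod_eq_one fun i _ => ind_true (h i)
  · rw [ind_false h, eq_comm]
    push_neg at h
    obtain ⟨i, hi⟩ := h
    exact Finset.prod_eq_zero (mem_univ i) (ind_false hi)

lemma ind_mul_pow (p : Prop) (x : ℝ) {k : ℕ} (hk : 0 < k) :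
    (ind p * x) ^ k = ind p * x ^ k := by
  by_cases h : p
  · simp [ind_true h]
  · simp [ind_false h, zero_pow hk.ne']

lemma sum_ind_card {X : Type*} [Fintype X] (p : X → Prop) :
    ∑ x : X, ind (p x) = (Nat.card {x : X // p x} : ℝ) := by
  classical
  rw [Nat.card_eq_fintype_card, Fintype.card_subtype, Finset.card_filter]
  push_cast
  refine Finset.sum_congr rfl fun x _ => ?_
  by_cases h : p x <;> simp [ind, h]

/-- Summing `g (y i0)` over all functions `y`. -/
lemma sum_eval_split {ι κ : Type*} [Fintype ι] [Fintype κ] [DecidableEq ι]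
    (i0 : ι) (g : κ → ℝ) :
    ∑ y : ι → κ, g (y i0) =
      (∑ y0 : κ, g y0) * (Fintype.card κ : ℝ) ^ (Fintype.card ι - 1) := by
  classical
  calc ∑ y : ι → κ, g (y i0)
      = ∑ p : κ × ({ j // j ≠ i0 } → κ), g p.1 :=
        Fintype.sum_equiv (Equiv.funSplitAt i0 κ) _ _ (fun y => rfl)
    _ = ∑ y0 : κ, ∑ _r : { j // j ≠ i0 } → κ, g y0 := Fintype.sum_prod_type _
    _ = ∑ y0 : κ, g y0 * (Fintype.card ({ j // j ≠ i0 } → κ) : ℝ) := by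
        refine Finset.sum_congr rfl fun y0 _ => ?_
        rw [Finset.sum_const, Finset.card_univ, nsmul_eq_mul, mul_comm]
    _ = (∑ y0 : κ, g y0) * (Fintype.card κ : ℝ) ^ (Fintype.card ι - 1) := by
        rw [← Finset.sum_mul]
        congr 1
        rw [Fintype.card_fun]
        have hc : Fintype.card { j // j ≠ i0 } = Fintype.card ι - 1 := by
          rw [Fintype.card_subtype_compl, Fintype.card_subtype_eq]
        rw [hc]
        push_cast
        ring

variable {α β : Type*} [Fintype α] [Fintype β] [DecidableEq α]

/-- Indicator that `f` is a graph homomorphism from `F` to `G`. -/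
noncomputable def homInd (F : SimpleGraph α) (G : SimpleGraph β) (f : α → β) : ℝ :=
  ind (∀ a b, F.Adj a b → G.Adj (f a) (f b))

lemma card_hom_eq_sum (F : SimpleGraph α) (G : SimpleGraph β) :
    (Nat.card (F →g G) : ℝ) = ∑ f : α → β, homInd F G f := by
  unfold homInd
  rw [sum_ind_card]
  congr 1
  apply Nat.card_congr
  exact
    { toFun := fun f => ⟨f, fun a b h => f.map_rel h⟩
      invFun := fun f => ⟨f.1, fun {a b} h => f.2 a b h⟩
      left_inv := fun f => rfl
      right_inv := fun f => rfl }

/-- The number (as a real) of maps `α → Fin k → β` respecting all adjacency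
constraints of the partial blowup where vertices in `S` are fully blown up and
vertices outside `S` only have their `0`-th copy active. -/
noncomputable def cnt (F : SimpleGraph α) (G : SimpleGraph β) (k : ℕ) (S : Finset α) : ℝ :=
  ∑ φ : α → Fin k → β, ind (∀ a b, F.Adj a b → ∀ i j : Fin k,
    (a ∈ S ∨ (i : ℕ) = 0) → (b ∈ S ∨ (j : ℕ) = 0) → G.Adj (φ a i) (φ b j))

lemma cnt_nonneg (F : SimpleGraph α) (G : SimpleGraph β) (k : ℕ) (S : Finset α) :
    0 ≤ cnt F G k S :=
  Finset.sum_nonneg fun _ _ => ind_nonneg _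

lemma cnt_empty (F : SimpleGraph α) (G : SimpleGraph β) {k : ℕ} (hk : 0 < k) :
    cnt F G k ∅ = (Nat.card (F →g G) : ℝ) *
      ((Fintype.card β : ℝ) ^ Fintype.card α) ^ (k - 1) := by
  classical
  set z0 : Fin k := ⟨0, hk⟩ with hz0
  calc cnt F G k ∅
      = ∑ φ : α → Fin k → β, homInd F G (fun a => φ a z0) := by
        unfold cnt homInd
        refine Finset.sum_congr rfl fun φ _ => ind_congr ?_
        constructor
        · intro h a b hab
          exact h a b hab z0 z0 (Or.inr rfl) (Or.inr rfl)
        · intro h a b hab i j hi hj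
          have hi' : i = z0 := Fin.ext (hi.resolve_left (by simp))
          have hj' : j = z0 := Fin.ext (hj.resolve_left (by simp))
          subst hi'; subst hj'
          exact h a b hab
    _ = ∑ ψ : Fin k → α → β, homInd F G (ψ z0) :=
        Fintype.sum_equiv (Equiv.piComm fun (_ : α) (_ : Fin k) => β) _ _ (fun φ => rfl)
    _ = (∑ f : α → β, homInd F G f) *
          (Fintype.card (α → β) : ℝ) ^ (Fintype.card (Fin k) - 1) :=
        sum_eval_split z0 (homInd F G)
    _ = (Nat.card (F →g G) : ℝ) *
          ((Fintype.card β : ℝ) ^ Fintype.card α) ^ (k - 1) := by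
        rw [← card_hom_eq_sum, Fintype.card_fun, Fintype.card_fin]
        push_cast
        ring

lemma cnt_univ (F : SimpleGraph α) (G : SimpleGraph β) (k : ℕ) :
    cnt F G k Finset.univ = (Nat.card (blowup F k →g G) : ℝ) := by
  classical
  calc cnt F G k Finset.univ
      = ∑ φ : α → Fin k → β,
          homInd (blowup F k) G (fun p : α × Fin k => φ p.1 p.2) := by
        unfold cnt homInd
        refine Finset.sum_congr rfl fun φ _ => ind_congr ?_
        constructor
        · intro h p q hpq
          exact h p.1 q.1 hpq p.2 q.2 (Or.inl (mem_univ _)) (Or.inl (mem_univ _))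
        · intro h a b hab i j _ _
          exact h (a, i) (b, j) hab
    _ = ∑ f : α × Fin k → β, homInd (blowup F k) G f :=
        (Fintype.sum_equiv (Equiv.curry α (Fin k) β) _ _ (fun f => rfl)).symm
    _ = (Nat.card (blowup F k →g G) : ℝ) := (card_hom_eq_sum _ _).symm

lemma cnt_step (F : SimpleGraph α) (G : SimpleGraph β) [Nonempty β] {k : ℕ} (hk : 0 < k)
    {S : Finset α} {a : α} (ha : a ∉ S) :
    (cnt F G k S / (Fintype.card β : ℝ) ^ (Fintype.card α * k)) ^ k ≤
      cnt F G k (insert a S) / (Fintype.card β : ℝ) ^ (Fintype.card α * k) := by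
  classical
  have hnpos : (0:ℝ) < (Fintype.card β : ℝ) := by exact_mod_cast Fintype.card_pos
  have hv1 : 1 ≤ Fintype.card α := Fintype.card_pos_iff.mpr ⟨a⟩
  set z0 : Fin k := ⟨0, hk⟩ with hz0
  set Qp : ({ x // x ≠ a } → Fin k → β) → Prop := fun ψ =>
    ∀ (b c : { x // x ≠ a }), F.Adj b c → ∀ i j : Fin k,
      ((b : α) ∈ S ∨ (i : ℕ) = 0) → ((c : α) ∈ S ∨ (j : ℕ) = 0) →
        G.Adj (ψ b i) (ψ c j) with hQp
  set Cp : ({ x // x ≠ a } → Fin k → β) → β → Prop := fun ψ y =>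
    ∀ (b : { x // x ≠ a }), F.Adj a b → ∀ j : Fin k,
      ((b : α) ∈ S ∨ (j : ℕ) = 0) → G.Adj y (ψ b j) with hCp
  set f : ({ x // x ≠ a } → Fin k → β) → ℝ := fun ψ =>
    ind (Qp ψ) * ∑ y0 : β, ind (Cp ψ y0) with hf
  have hfnn : ∀ ψ, 0 ≤ f ψ := fun ψ =>
    mul_nonneg (ind_nonneg _) (Finset.sum_nonneg fun _ _ => ind_nonneg _)
  -- decomposition of `cnt F G k S`
  have hA : cnt F G k S = (∑ ψ, f ψ) * (Fintype.card β : ℝ) ^ (k - 1) := by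
    calc cnt F G k S
        = ∑ p : (Fin k → β) × ({ x // x ≠ a } → Fin k → β),
            ind (Qp p.2) * ind (Cp p.2 (p.1 z0)) := by
          unfold cnt
          refine Fintype.sum_equiv (Equiv.funSplitAt a (Fin k → β)) _ _ fun φ => ?_
          rw [← ind_and]
          refine ind_congr ?_
          constructor
          · intro h
            constructor
            · intro b c hbc i j hi hj
              exact h b c hbc i j hi hj
            · intro b hab j hj
              exact h a b hab z0 j (Or.inr rfl) hj
          · rintro ⟨hq, hc⟩ b c hbc i j hi hj
            by_cases hb : b = a
            · subst hb
              by_cases hcc : c = b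
              · subst hcc; exact absurd hbc (F.loopless.irrefl _)
              · have hi' : i = z0 := Fin.ext (hi.resolve_left (fun h => ha h))
                subst hi'
                exact hc ⟨c, hcc⟩ hbc j hj
            · by_cases hcc : c = a
              · subst hcc
                have hj' : j = z0 := Fin.ext (hj.resolve_left (fun h => ha h))
                subst hj'
                exact (hc ⟨b, hb⟩ hbc.symm i hi).symm
              · exact hq ⟨b, hb⟩ ⟨c, hcc⟩ hbc i j hi hj
      _ = ∑ y : Fin k → β, ∑ ψ : { x // x ≠ a } → Fin k → β,
            ind (Qp ψ) * ind (Cp ψ (y z0)) := Fintype.sum_prod_type _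
      _ = ∑ ψ : { x // x ≠ a } → Fin k → β, ∑ y : Fin k → β,
            ind (Qp ψ) * ind (Cp ψ (y z0)) := Finset.sum_comm
      _ = ∑ ψ : { x // x ≠ a } → Fin k → β, f ψ * (Fintype.card β : ℝ) ^ (k - 1) := by
          refine Finset.sum_congr rfl fun ψ _ => ?_
          rw [← Finset.mul_sum, sum_eval_split z0 (fun y0 => ind (Cp ψ y0)),
            Fintype.card_fin, hf]
          ring
      _ = (∑ ψ, f ψ) * (Fintype.card β : ℝ) ^ (k - 1) := by rw [← Finset.sum_mul]
  -- decomposition of `cnt F G k (insert a S)`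
  have hB : cnt F G k (insert a S) = ∑ ψ, f ψ ^ k := by
    calc cnt F G k (insert a S)
        = ∑ p : (Fin k → β) × ({ x // x ≠ a } → Fin k → β),
            ind (Qp p.2) * ind (∀ i, Cp p.2 (p.1 i)) := by
          unfold cnt
          refine Fintype.sum_equiv (Equiv.funSplitAt a (Fin k → β)) _ _ fun φ => ?_
          rw [← ind_and]
          refine ind_congr ?_
          constructor
          · intro h
            constructor
            · intro b c hbc i j hi hj
              exact h b c hbc i j (hi.imp_left mem_insert_of_mem)
                (hj.imp_left mem_insert_of_mem)
            · intro i b hab j hj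
              exact h a b hab i j (Or.inl (mem_insert_self a S))
                (hj.imp_left mem_insert_of_mem)
          · rintro ⟨hq, hc⟩ b c hbc i j hi hj
            by_cases hb : b = a
            · subst hb
              by_cases hcc : c = b
              · subst hcc; exact absurd hbc (F.loopless.irrefl _)
              · refine hc i ⟨c, hcc⟩ hbc j ?_
                rcases hj with hj | hj
                · exact Or.inl ((Finset.mem_insert.mp hj).resolve_left hcc)
                · exact Or.inr hj
            · by_cases hcc : c = a
              · subst hcc
                refine (hc j ⟨b, hb⟩ hbc.symm i ?_).symm
                rcases hi with hi | hi
                · exact Or.inl ((Finset.mem_insert.mp hi).resolve_left hb)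
                · exact Or.inr hi
              · refine hq ⟨b, hb⟩ ⟨c, hcc⟩ hbc i j ?_ ?_
                · rcases hi with hi | hi
                  · exact Or.inl ((Finset.mem_insert.mp hi).resolve_left hb)
                  · exact Or.inr hi
                · rcases hj with hj | hj
                  · exact Or.inl ((Finset.mem_insert.mp hj).resolve_left hcc)
                  · exact Or.inr hj
      _ = ∑ y : Fin k → β, ∑ ψ : { x // x ≠ a } → Fin k → β,
            ind (Qp ψ) * ind (∀ i, Cp ψ (y i)) := Fintype.sum_prod_type _
      _ = ∑ ψ : { x // x ≠ a } → Fin k → β, ∑ y : Fin k → β,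
            ind (Qp ψ) * ind (∀ i, Cp ψ (y i)) := Finset.sum_comm
      _ = ∑ ψ, f ψ ^ k := by
          refine Finset.sum_congr rfl fun ψ _ => ?_
          have h2 : ∀ y : Fin k → β, ind (∀ i, Cp ψ (y i)) = ∏ i, ind (Cp ψ (y i)) :=
            fun y => ind_forall _
          rw [← Finset.mul_sum]
          rw [Finset.sum_congr rfl fun y _ => h2 y]
          simp only [hf]
          rw [ind_mul_pow _ _ hk, Fintype.sum_pow]
  -- the power-mean (Jensen) step
  have hM : (Fintype.card ({ x // x ≠ a } → Fin k → β) : ℝ)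
      = (Fintype.card β : ℝ) ^ (k * (Fintype.card α - 1)) := by
    rw [Fintype.card_fun, Fintype.card_fun, Fintype.card_fin]
    have hc : Fintype.card { x // x ≠ a } = Fintype.card α - 1 := by
      rw [Fintype.card_subtype_compl, Fintype.card_subtype_eq]
    rw [hc]
    push_cast
    rw [← pow_mul]
  have hHolder : (∑ ψ, f ψ) ^ k ≤
      cnt F G k (insert a S) *
        (Fintype.card β : ℝ) ^ (k * (Fintype.card α - 1) * (k - 1)) := by
    have h := pow_sum_div_card_le_sum_pow (s := Finset.univ)
      (f := f) (fun i _ => hfnn i) (k - 1)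
    rw [Nat.sub_add_cancel hk, Finset.card_univ] at h
    rw [hB]
    have hcard : ((Fintype.card ({ x // x ≠ a } → Fin k → β) : ℝ)) ^ (k - 1)
        = (Fintype.card β : ℝ) ^ (k * (Fintype.card α - 1) * (k - 1)) := by
      rw [hM, ← pow_mul]
    calc (∑ ψ, f ψ) ^ k
        = ((∑ ψ, f ψ) ^ k / (Fintype.card ({ x // x ≠ a } → Fin k → β) : ℝ) ^ (k - 1))
          * (Fintype.card ({ x // x ≠ a } → Fin k → β) : ℝ) ^ (k - 1) := by
          rw [div_mul_cancel₀]
          rw [hcard]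
          positivity
      _ ≤ (∑ ψ, f ψ ^ k) *
            (Fintype.card ({ x // x ≠ a } → Fin k → β) : ℝ) ^ (k - 1) := by
          refine mul_le_mul_of_nonneg_right ?_ (by positivity)
          exact_mod_cast h
      _ = (∑ ψ, f ψ ^ k) *
            (Fintype.card β : ℝ) ^ (k * (Fintype.card α - 1) * (k - 1)) := by
          rw [hcard]
  -- final computation
  obtain ⟨v', hv'⟩ : ∃ v', Fintype.card α = v' + 1 :=
    ⟨Fintype.card α - 1, (Nat.succ_pred_eq_of_pos hv1).symm⟩
  obtain ⟨k', hk'⟩ : ∃ k', k = k' + 1 := ⟨k - 1, (Nat.succ_pred_eq_of_pos hk).symm⟩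
  have hexp : Fintype.card α * k * k =
      (k - 1) * k + (k * (Fintype.card α - 1) * (k - 1) + Fintype.card α * k) := by
    rw [hv', hk']
    simp only [Nat.add_sub_cancel]
    ring
  rw [hA, div_pow, mul_pow, ← pow_mul, ← pow_mul]
  rw [div_le_div_iff₀ (by positivity) (by positivity)]
  calc (∑ ψ, f ψ) ^ k * ((Fintype.card β : ℝ) ^ ((k-1) * k)) * (Fintype.card β : ℝ) ^ (Fintype.card α * k)
      ≤ (cnt F G k (insert a S) *
          (Fintype.card β : ℝ) ^ (k * (Fintype.card α - 1) * (k - 1))) *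
          ((Fintype.card β : ℝ) ^ ((k-1) * k)) * (Fintype.card β : ℝ) ^ (Fintype.card α * k) := by
        refine mul_le_mul_of_nonneg_right
          (mul_le_mul_of_nonneg_right hHolder (by positivity)) (by positivity)
    _ = cnt F G k (insert a S) * (Fintype.card β : ℝ) ^ (Fintype.card α * k * k) := by
        rw [hexp, pow_add, pow_add]
        ring

end BlowupAux

/-- **Blowup homomorphism density inequality:**
`hom(F^{(k)}, G) ≥ hom(F, G)^{k^{v(F)}}`. -/
theorem homDensity_blowup {α β : Type*} [Fintype α] [Fintype β] [Nonempty β]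
    (F : SimpleGraph α) (G : SimpleGraph β) (k : ℕ) (hk : 0 < k) :
    homDensity F G ^ (k ^ Fintype.card α) ≤ homDensity (blowup F k) G := by
  classical
  have hn : (0:ℝ) < (Fintype.card β : ℝ) := by exact_mod_cast Fintype.card_pos
  have main : ∀ S : Finset α,
      (BlowupAux.cnt F G k ∅ / (Fintype.card β : ℝ) ^ (Fintype.card α * k)) ^ (k ^ S.card)
        ≤ BlowupAux.cnt F G k S / (Fintype.card β : ℝ) ^ (Fintype.card α * k) := by
    intro S
    induction S using Finset.induction_on with
    | empty => simp
    | @insert a s ha ih =>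
      rw [Finset.card_insert_of_notMem ha, pow_succ, pow_mul]
      calc ((BlowupAux.cnt F G k ∅ / (Fintype.card β : ℝ) ^ (Fintype.card α * k)) ^ (k ^ s.card)) ^ k
          ≤ (BlowupAux.cnt F G k s / (Fintype.card β : ℝ) ^ (Fintype.card α * k)) ^ k := by
            refine pow_le_pow_left₀ (pow_nonneg ?_ _) ih k
            exact div_nonneg (BlowupAux.cnt_nonneg F G k ∅) (by positivity)
        _ ≤ BlowupAux.cnt F G k (insert a s) / (Fintype.card β : ℝ) ^ (Fintype.card α * k) :=
            BlowupAux.cnt_step F G hk ha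
  have h0 : BlowupAux.cnt F G k ∅ / (Fintype.card β : ℝ) ^ (Fintype.card α * k)
      = homDensity F G := by
    obtain ⟨k', rfl⟩ : ∃ k', k = k' + 1 := ⟨k - 1, (Nat.succ_pred_eq_of_pos hk).symm⟩
    rw [BlowupAux.cnt_empty F G hk, homDensity]
    rw [div_eq_div_iff (by positivity) (by positivity)]
    rw [Nat.add_sub_cancel]
    rw [pow_mul, mul_assoc, ← pow_succ]
  have hU : BlowupAux.cnt F G k Finset.univ / (Fintype.card β : ℝ) ^ (Fintype.card α * k)
      = homDensity (blowup F k) G := by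
    rw [BlowupAux.cnt_univ F G k, homDensity, Fintype.card_prod, Fintype.card_fin]
  have := main Finset.univ
  rw [Finset.card_univ, h0, hU] at this
  exact this
end

section
/- Let k be a positive integer, let ε ∈ [0,1), and let G be a graph with at least one vertex satisfying m(G) ≤ k + ε. Then at least one of the following holds: (1) G has a vertex of degree at most 2k; (2) ε ≥ 1/2 and G has a vertex of degree exactly 2k+1 that has a neighbour of degree at most 2k+2; (3) ε ≥ 7/8 and G has a vertex of degree exactly 2k+3 that has at least two neighbours of degree exactly 2k+1. -/
open Finset

/-- The density `m(G)` of a graph `G`: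
`max({e_F/v_F : F a nonempty subgraph of G} ∪ {0})`.  A subgraph `F` is
represented by its (nonempty) vertex set `W` and edge set `E ⊆ E(G)` with all
endpoints of edges of `E` lying in `W`. -/
noncomputable def mDens {V : Type*} [Fintype V] (G : SimpleGraph V) : ℝ :=
  sSup ({0} ∪ {x : ℝ | ∃ (W : Set V) (E : Set (Sym2 V)), E ⊆ G.edgeSet ∧
    (∀ e ∈ E, ∀ v ∈ e, v ∈ W) ∧ W.Nonempty ∧
    x = (E.ncard : ℝ) / (W.ncard : ℝ)})

set_option maxHeartbeats 2000000 in
/-- **Discharging claim.** If `m(G) ≤ k + ε` with `k ≥ 1` a positive integer and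
`ε ∈ [0,1)`, then: (1) `G` has a vertex of degree at most `2k`; or
(2) `ε ≥ 1/2` and `G` has a vertex of degree exactly `2k+1` with a neighbour of
degree at most `2k+2`; or (3) `ε ≥ 7/8` and `G` has a vertex of degree exactly
`2k+3` with two distinct neighbours of degree exactly `2k+1`. -/
theorem discharging {V : Type*} [Fintype V] [Nonempty V] (G : SimpleGraph V)
    [DecidableRel G.Adj] (k : ℕ) (hk : 0 < k) (ε : ℝ) (hε0 : 0 ≤ ε) (hε1 : ε < 1)
    (hm : mDens G ≤ (k : ℝ) + ε) :
    (∃ v, G.degree v ≤ 2 * k) ∨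
    (1 / 2 ≤ ε ∧ ∃ v w, G.Adj v w ∧ G.degree v = 2 * k + 1 ∧ G.degree w ≤ 2 * k + 2) ∨
    (7 / 8 ≤ ε ∧ ∃ v w₁ w₂, G.Adj v w₁ ∧ G.Adj v w₂ ∧ w₁ ≠ w₂ ∧
      G.degree v = 2 * k + 3 ∧ G.degree w₁ = 2 * k + 1 ∧ G.degree w₂ = 2 * k + 1) := by
  classical
  by_contra hcon
  push_neg at hcon
  obtain ⟨h1, h2, h3⟩ := hcon
  have hK : (1 : ℝ) ≤ (k : ℝ) := by exact_mod_cast hk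
  have hn1 : (1 : ℝ) ≤ (Fintype.card V : ℝ) := by exact_mod_cast Fintype.card_pos (α := V)
  -- Step 1: edge bound from the density hypothesis
  have hedge : (G.edgeFinset.card : ℝ) ≤ ((k : ℝ) + ε) * (Fintype.card V : ℝ) := by
    rw [mDens] at hm
    have hbdd : BddAbove ({0} ∪ {x : ℝ | ∃ (W : Set V) (E : Set (Sym2 V)), E ⊆ G.edgeSet ∧
        (∀ e ∈ E, ∀ v ∈ e, v ∈ W) ∧ W.Nonempty ∧
        x = (E.ncard : ℝ) / (W.ncard : ℝ)}) := by
      refine ⟨(G.edgeSet.ncard : ℝ), ?_⟩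
      rintro x (rfl | ⟨W, E, hE, -, hW, rfl⟩)
      · positivity
      · have hWcard : (1 : ℝ) ≤ (W.ncard : ℝ) := by
          exact_mod_cast (Set.ncard_pos (Set.toFinite W)).2 hW
        have hEcard : (E.ncard : ℝ) ≤ (G.edgeSet.ncard : ℝ) := by
          exact_mod_cast Set.ncard_le_ncard hE (Set.toFinite _)
        calc (E.ncard : ℝ) / (W.ncard : ℝ) ≤ (E.ncard : ℝ) :=
              div_le_self (by positivity) hWcard
          _ ≤ _ := hEcard
    have hmem : ((G.edgeSet.ncard : ℝ) / ((Set.univ : Set V).ncard : ℝ)) ∈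
        ({0} ∪ {x : ℝ | ∃ (W : Set V) (E : Set (Sym2 V)), E ⊆ G.edgeSet ∧
        (∀ e ∈ E, ∀ v ∈ e, v ∈ W) ∧ W.Nonempty ∧
        x = (E.ncard : ℝ) / (W.ncard : ℝ)}) := by
      right
      exact ⟨Set.univ, G.edgeSet, subset_rfl, fun e _ v _ => trivial, Set.univ_nonempty, rfl⟩
    have hle := (le_csSup hbdd hmem).trans hm
    have hcard : (G.edgeSet.ncard : ℝ) = (G.edgeFinset.card : ℝ) := by
      rw [Set.ncard_eq_toFinset_card' G.edgeSet]
      rw [show G.edgeSet.toFinset = G.edgeFinset by ext e; simp]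
    rw [Set.ncard_univ, Nat.card_eq_fintype_card, hcard,
      div_le_iff₀ (by linarith)] at hle
    exact hle
  have hSnat := G.sum_degrees_eq_twice_card_edges
  have hSdeg : ∑ v : V, (G.degree v : ℝ) = 2 * (G.edgeFinset.card : ℝ) := by
    exact_mod_cast congrArg (fun m : ℕ => (m : ℝ)) hSnat
  have hSle : ∑ v : V, (G.degree v : ℝ) ≤ 2 * ((k : ℝ) + ε) * (Fintype.card V : ℝ) := by
    rw [hSdeg]; linarith
  have hdlb : ∀ v, 2 * (k : ℝ) + 1 ≤ (G.degree v : ℝ) := by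
    intro v
    have := h1 v
    have : 2 * k + 1 ≤ G.degree v := this
    exact_mod_cast this
  -- Case ε < 1/2 : minimum degree already gives a contradiction
  rcases lt_or_ge ε (1 / 2) with hε | half
  · have hlow : (2 * (k : ℝ) + 1) * (Fintype.card V : ℝ) ≤ ∑ v : V, (G.degree v : ℝ) := by
      calc (2 * (k : ℝ) + 1) * (Fintype.card V : ℝ)
          = ∑ _v : V, (2 * (k : ℝ) + 1) := by rw [Finset.sum_const, card_univ]; ring
        _ ≤ ∑ v : V, (G.degree v : ℝ) := Finset.sum_le_sum fun v _ => hdlb v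
    nlinarith
  · -- now ε ≥ 1/2 and every neighbour of a (2k+1)-vertex has degree ≥ 2k+3
    have h2' : ∀ v w, G.Adj v w → G.degree v = 2 * k + 1 → 2 * k + 2 < G.degree w := h2 half
    set A : Finset V := Finset.univ.filter (fun v => G.degree v = 2 * k + 1) with hA
    have hdc : ∑ c : V, ((A.filter (fun w => G.Adj c w)).card : ℝ) =
        (2 * (k : ℝ) + 1) * (A.card : ℝ) := by
      have : ∑ c : V, (A.filter (fun w => G.Adj c w)).card = (2 * k + 1) * A.card := by
        calc ∑ c : V, (A.filter (fun w => G.Adj c w)).card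
            = ∑ c : V, ∑ w ∈ A, if G.Adj c w then 1 else 0 :=
              Finset.sum_congr rfl fun c _ => Finset.card_filter _ _
          _ = ∑ w ∈ A, ∑ c : V, if G.Adj c w then 1 else 0 := Finset.sum_comm
          _ = ∑ w ∈ A, G.degree w := by
              refine Finset.sum_congr rfl fun w _ => ?_
              rw [← Finset.card_filter]
              rw [SimpleGraph.degree, SimpleGraph.neighborFinset_eq_filter]
              congr 1
              exact Finset.filter_congr fun c _ => by rw [G.adj_comm]
          _ = ∑ _w ∈ A, (2 * k + 1) :=
              Finset.sum_congr rfl fun w hw => (Finset.mem_filter.1 hw).2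
          _ = (2 * k + 1) * A.card := by rw [Finset.sum_const, smul_eq_mul, mul_comm]
      exact_mod_cast congrArg (fun m : ℕ => (m : ℝ)) this
    have hmzero : ∀ v, G.degree v ≤ 2 * k + 2 → (A.filter (fun w => G.Adj v w)) = ∅ := by
      intro v hv
      rw [Finset.filter_eq_empty_iff]
      intro w hw hadj
      have hdw : G.degree w = 2 * k + 1 := (Finset.mem_filter.1 hw).2
      have := h2' w v hadj.symm hdw
      omega
    have hmle : ∀ v, ((A.filter (fun w => G.Adj v w)).card : ℝ) ≤ (G.degree v : ℝ) := by
      intro v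
      have : (A.filter (fun w => G.Adj v w)).card ≤ G.degree v := by
        rw [SimpleGraph.degree, SimpleGraph.neighborFinset_eq_filter]
        exact Finset.card_le_card (Finset.filter_subset_filter _ (Finset.subset_univ A))
      exact_mod_cast this
    have hmnn : ∀ v, (0 : ℝ) ≤ ((A.filter (fun w => G.Adj v w)).card : ℝ) := fun v => by positivity
    have hindsum : ∑ v : V, (if v ∈ A then (1 : ℝ) else 0) = (A.card : ℝ) := by
      rw [Finset.sum_ite_mem, Finset.univ_inter, Finset.sum_const, nsmul_eq_mul, mul_one]
    rcases lt_or_ge ε (7 / 8) with hε78 | seven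
    · -- pointwise: (8k+4)·deg v − 3·m v + 3(2k+1)·1_A(v) ≥ 16k²+22k+7
      have key : ∀ v : V, (16 * (k : ℝ) ^ 2 + 22 * k + 7) ≤
          (8 * (k : ℝ) + 4) * (G.degree v : ℝ) - 3 * ((A.filter (fun w => G.Adj v w)).card : ℝ)
            + (3 * (2 * (k : ℝ) + 1)) * (if v ∈ A then (1 : ℝ) else 0) := by
        intro v
        by_cases hvA : v ∈ A
        · have hdv : G.degree v = 2 * k + 1 := (Finset.mem_filter.1 hvA).2
          have hdvr : (G.degree v : ℝ) = 2 * (k : ℝ) + 1 := by exact_mod_cast hdv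
          have hm0 : (A.filter (fun w => G.Adj v w)) = ∅ := hmzero v (by omega)
          rw [if_pos hvA, hm0, hdvr]
          simp only [Finset.card_empty, Nat.cast_zero]
          nlinarith
        · rw [if_neg hvA]
          rcases le_or_gt (G.degree v) (2 * k + 2) with hdv | hdv
          · have hm0 : (A.filter (fun w => G.Adj v w)) = ∅ := hmzero v hdv
            have hdv2 : G.degree v = 2 * k + 2 := by
              have h1v := h1 v
              have : G.degree v ≠ 2 * k + 1 := by
                intro h; exact hvA (Finset.mem_filter.2 ⟨Finset.mem_univ v, h⟩)
              omega
            have hdvr : (G.degree v : ℝ) = 2 * (k : ℝ) + 2 := by exact_mod_cast hdv2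
            rw [hm0, hdvr]
            simp only [Finset.card_empty, Nat.cast_zero]
            nlinarith
          · have hdvr : 2 * (k : ℝ) + 3 ≤ (G.degree v : ℝ) := by
              have : 2 * k + 3 ≤ G.degree v := hdv
              exact_mod_cast this
            have := hmle v
            have := hmnn v
            nlinarith
      have hsum : (16 * (k : ℝ) ^ 2 + 22 * k + 7) * (Fintype.card V : ℝ) ≤
          (8 * (k : ℝ) + 4) * ∑ v : V, (G.degree v : ℝ) := by
        have := Finset.sum_le_sum (fun v (_ : v ∈ Finset.univ) => key v)
        rw [Finset.sum_const, card_univ, Finset.sum_add_distrib, Finset.sum_sub_distrib,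
          ← Finset.mul_sum, ← Finset.mul_sum, ← Finset.mul_sum, hdc, hindsum] at this
        rw [nsmul_eq_mul] at this
        linarith [this]
      have hc : (8 * (k : ℝ) + 4) * (2 * ((k : ℝ) + ε)) < 16 * (k : ℝ) ^ 2 + 22 * k + 7 := by
        nlinarith [mul_pos (show (0:ℝ) < 2 * (k:ℝ) + 1 by linarith)
          (show (0:ℝ) < 7 - 8 * ε by linarith)]
      have h5 : (8 * (k : ℝ) + 4) * ∑ v : V, (G.degree v : ℝ) ≤
          (8 * (k : ℝ) + 4) * (2 * ((k : ℝ) + ε) * (Fintype.card V : ℝ)) :=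
        mul_le_mul_of_nonneg_left hSle (by linarith)
      have hS2 : (16 * (k : ℝ) ^ 2 + 22 * k + 7) * (Fintype.card V : ℝ) ≤
          (8 * (k : ℝ) + 4) * (2 * ((k : ℝ) + ε)) * (Fintype.card V : ℝ) :=
        hsum.trans (by rw [mul_assoc]; exact h5)
      have := mul_lt_mul_of_pos_right hc (show (0:ℝ) < (Fintype.card V : ℝ) by linarith)
      linarith
    · -- ε ≥ 7/8 : use also the third forbidden configuration
      have h3' := h3 seven
      -- pointwise: (2k+1)·deg v − m v + (2k+1)·1_A(v) ≥ (2k+1)(2k+2)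
      have key : ∀ v : V, (4 * (k : ℝ) ^ 2 + 6 * k + 2) ≤
          (2 * (k : ℝ) + 1) * (G.degree v : ℝ) - ((A.filter (fun w => G.Adj v w)).card : ℝ)
            + (2 * (k : ℝ) + 1) * (if v ∈ A then (1 : ℝ) else 0) := by
        intro v
        by_cases hvA : v ∈ A
        · have hdv : G.degree v = 2 * k + 1 := (Finset.mem_filter.1 hvA).2
          have hdvr : (G.degree v : ℝ) = 2 * (k : ℝ) + 1 := by exact_mod_cast hdv
          have hm0 : (A.filter (fun w => G.Adj v w)) = ∅ := hmzero v (by omega)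
          rw [if_pos hvA, hm0, hdvr]
          simp only [Finset.card_empty, Nat.cast_zero]
          nlinarith
        · rw [if_neg hvA]
          rcases le_or_gt (G.degree v) (2 * k + 2) with hdv | hdv
          · have hm0 : (A.filter (fun w => G.Adj v w)) = ∅ := hmzero v hdv
            have hdv2 : G.degree v = 2 * k + 2 := by
              have h1v := h1 v
              have : G.degree v ≠ 2 * k + 1 := by
                intro h; exact hvA (Finset.mem_filter.2 ⟨Finset.mem_univ v, h⟩)
              omega
            have hdvr : (G.degree v : ℝ) = 2 * (k : ℝ) + 2 := by exact_mod_cast hdv2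
            rw [hm0, hdvr]
            simp only [Finset.card_empty, Nat.cast_zero]
            nlinarith
          · rcases eq_or_lt_of_le (show 2 * k + 3 ≤ G.degree v from hdv) with hdv3 | hdv4
            · -- degree exactly 2k+3 : at most one neighbour in A
              have hcard1 : (A.filter (fun w => G.Adj v w)).card ≤ 1 := by
                rw [Finset.card_le_one]
                intro w₁ hw₁ w₂ hw₂
                by_contra hne
                obtain ⟨hw₁A, hadj₁⟩ := Finset.mem_filter.1 hw₁
                obtain ⟨hw₂A, hadj₂⟩ := Finset.mem_filter.1 hw₂
                exact h3' v w₁ w₂ hadj₁ hadj₂ hne hdv3.symm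
                  (Finset.mem_filter.1 hw₁A).2 (Finset.mem_filter.1 hw₂A).2
              have hcard1r : ((A.filter (fun w => G.Adj v w)).card : ℝ) ≤ 1 := by
                exact_mod_cast hcard1
              have hdvr : (G.degree v : ℝ) = 2 * (k : ℝ) + 3 := by
                exact_mod_cast hdv3.symm
              rw [hdvr]
              nlinarith
            · have hdvr : 2 * (k : ℝ) + 4 ≤ (G.degree v : ℝ) := by
                have : 2 * k + 4 ≤ G.degree v := hdv4
                exact_mod_cast this
              have := hmle v
              have := hmnn v
              nlinarith
      have hsum : (4 * (k : ℝ) ^ 2 + 6 * k + 2) * (Fintype.card V : ℝ) ≤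
          (2 * (k : ℝ) + 1) * ∑ v : V, (G.degree v : ℝ) := by
        have := Finset.sum_le_sum (fun v (_ : v ∈ Finset.univ) => key v)
        rw [Finset.sum_const, card_univ, Finset.sum_add_distrib, Finset.sum_sub_distrib,
          ← Finset.mul_sum, ← Finset.mul_sum, hdc, hindsum] at this
        rw [nsmul_eq_mul] at this
        linarith [this]
      have hc : (2 * (k : ℝ) + 1) * (2 * ((k : ℝ) + ε)) < 4 * (k : ℝ) ^ 2 + 6 * k + 2 := by
        nlinarith [mul_pos (show (0:ℝ) < 2 * (k:ℝ) + 1 by linarith)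
          (show (0:ℝ) < 1 - ε by linarith)]
      have h5 : (2 * (k : ℝ) + 1) * ∑ v : V, (G.degree v : ℝ) ≤
          (2 * (k : ℝ) + 1) * (2 * ((k : ℝ) + ε) * (Fintype.card V : ℝ)) :=
        mul_le_mul_of_nonneg_left hSle (by linarith)
      have hS2 : (4 * (k : ℝ) ^ 2 + 6 * k + 2) * (Fintype.card V : ℝ) ≤
          (2 * (k : ℝ) + 1) * (2 * ((k : ℝ) + ε)) * (Fintype.card V : ℝ) :=
        hsum.trans (by rw [mul_assoc]; exact h5)
      have := mul_lt_mul_of_pos_right hc (show (0:ℝ) < (Fintype.card V : ℝ) by linarith)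
      linarith
end

section
/- Let t be a positive integer and let β > 0. Then there exists γ > 0, depending only on β and t, such that the following holds for every finite abelian group X with |X| = N and every sequence Y = (Y₁,…,Y_t) of subsets of X: if the number of Y-prestars is at least β·N^{t+1}, then the number of Y-preconstellations is at least γ·N^{3t+2}. -/
/-- A `Y`-prestar in an abelian group `X`: a triple `(x, y, a)` with
`x, y ∈ X^t` and `a ∈ X` such that for every `i` one has `x i ∈ Y i`,
`y i ∈ Y i` and one of `x i + y i = a`, `x i − y i = a`, `y i − x i = a`.
The element `a` is the centre of the prestar. -/
def IsPrestar {X : Type*} [AddCommGroup X] {t : ℕ} (Y : Fin t → Set X)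
    (P : (Fin t → X) × (Fin t → X) × X) : Prop :=
  ∀ i : Fin t, P.1 i ∈ Y i ∧ P.2.1 i ∈ Y i ∧
    (P.1 i + P.2.1 i = P.2.2 ∨ P.1 i - P.2.1 i = P.2.2 ∨ P.2.1 i - P.1 i = P.2.2)

/-- A `Y`-preconstellation: an ordered triple of `Y`-prestars whose centres
`a₁, a₂, a₃` satisfy `a_i + a_j = a_k` for some permutation `(i,j,k)` of `(1,2,3)`. -/
def IsPreconstellation {X : Type*} [AddCommGroup X] {t : ℕ} (Y : Fin t → Set X)
    (Q : ((Fin t → X) × (Fin t → X) × X) × ((Fin t → X) × (Fin t → X) × X) ×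
      ((Fin t → X) × (Fin t → X) × X)) : Prop :=
  IsPrestar Y Q.1 ∧ IsPrestar Y Q.2.1 ∧ IsPrestar Y Q.2.2 ∧
    ∃ σ : Equiv.Perm (Fin 3),
      ![Q.1.2.2, Q.2.1.2.2, Q.2.2.2.2] (σ 0) + ![Q.1.2.2, Q.2.1.2.2, Q.2.2.2.2] (σ 1) =
        ![Q.1.2.2, Q.2.1.2.2, Q.2.2.2.2] (σ 2)

open Finset in
/-- Helper: the tag of a prestar coordinate determines the second entry. -/
lemma prestar_tag_recover {X : Type*} [AddCommGroup X] [DecidableEq X] (x y y' a : X)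
    (h : x + y = a ∨ x - y = a ∨ y - x = a)
    (h' : x + y' = a ∨ x - y' = a ∨ y' - x = a)
    (htag : (if x + y = a then (0 : Fin 3) else if x - y = a then 1 else 2) =
            (if x + y' = a then (0 : Fin 3) else if x - y' = a then 1 else 2)) :
    y = y' := by
  by_cases c1 : x + y = a
  · rw [if_pos c1] at htag
    by_cases c1' : x + y' = a
    · exact add_left_cancel (c1.trans c1'.symm)
    · rw [if_neg c1'] at htag
      by_cases c2' : x - y' = a
      · rw [if_pos c2'] at htag; exact absurd htag (by decide)
      · rw [if_neg c2'] at htag; exact absurd htag (by decide)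
  · rw [if_neg c1] at htag
    by_cases c1' : x + y' = a
    · rw [if_pos c1'] at htag
      by_cases c2 : x - y = a
      · rw [if_pos c2] at htag; exact absurd htag (by decide)
      · rw [if_neg c2] at htag; exact absurd htag (by decide)
    · rw [if_neg c1'] at htag
      by_cases c2 : x - y = a
      · rw [if_pos c2] at htag
        by_cases c2' : x - y' = a
        · have hy : y = x - (x - y) := by abel
          have hy' : y' = x - (x - y') := by abel
          rw [hy, hy', c2, c2']
        · rw [if_neg c2'] at htag; exact absurd htag (by decide)
      · rw [if_neg c2] at htag
        by_cases c2' : x - y' = a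
        · rw [if_pos c2'] at htag; exact absurd htag (by decide)
        · have e : y - x = a := (h.resolve_left c1).resolve_left c2
          have e' : y' - x = a := (h'.resolve_left c1').resolve_left c2'
          have hy : y = (y - x) + x := by abel
          have hy' : y' = (y' - x) + x := by abel
          rw [hy, hy', e, e']

/-- **Prestars yield preconstellations.** -/
theorem prestars_to_preconstellations (t : ℕ) (ht : 0 < t) (β : ℝ) (hβ : 0 < β) :
    ∃ γ : ℝ, 0 < γ ∧ ∀ (X : Type) [AddCommGroup X] [Fintype X] (Y : Fin t → Set X),
      β * (Fintype.card X : ℝ) ^ (t + 1) ≤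
        (Nat.card {P : (Fin t → X) × (Fin t → X) × X // IsPrestar Y P} : ℝ) →
      γ * (Fintype.card X : ℝ) ^ (3 * t + 2) ≤
        (Nat.card {Q : ((Fin t → X) × (Fin t → X) × X) × ((Fin t → X) × (Fin t → X) × X) ×
          ((Fin t → X) × (Fin t → X) × X) // IsPreconstellation Y Q} : ℝ) := by
  classical
  refine ⟨(β / 3 ^ t) ^ 6, by positivity, ?_⟩
  intro X _ _ Y hS
  set N := Fintype.card X with hNdef
  have hN0 : 0 < N := Fintype.card_pos
  set i0 : Fin t := ⟨0, ht⟩ with hi0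
  -- the box `A`
  set A : Finset (Fin t → X) := Finset.univ.filter (fun x => ∀ i, x i ∈ Y i) with hA
  have hAmem : ∀ x : Fin t → X, x ∈ A ↔ ∀ i, x i ∈ Y i := by
    intro x; simp [hA]
  -- the diagonal subgroup
  set δ : X →+ (Fin t → X) := AddMonoidHom.mk' (fun a _ => a) (fun a b => rfl) with hδ
  have δinj : Function.Injective δ := fun a b h => congrFun h i0
  set H : AddSubgroup (Fin t → X) := δ.range with hH
  -- the quotient
  haveI : Fintype ((Fin t → X) ⧸ H) := Fintype.ofFinite _
  set q : ℕ := Fintype.card ((Fin t → X) ⧸ H) with hqdef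
  -- the fibering map
  set Ψ : ((Fin t → X) × (Fin t → X) × (Fin t → X)) →
      (Fin t → X) × ((Fin t → X) ⧸ H) × ((Fin t → X) ⧸ H) :=
    fun ω => (ω.1 + ω.2.1 + ω.2.2, (ω.1 : (Fin t → X) ⧸ H), (ω.2.1 : (Fin t → X) ⧸ H))
    with hΨ
  set W : Finset ((Fin t → X) × (Fin t → X) × (Fin t → X)) := A ×ˢ A ×ˢ A with hW
  set D : Finset (((Fin t → X) × (Fin t → X) × (Fin t → X)) ×
      ((Fin t → X) × (Fin t → X) × (Fin t → X))) :=
    (W ×ˢ W).filter (fun ρ => Ψ ρ.1 = Ψ ρ.2) with hD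
  set PS : Finset ((Fin t → X) × (Fin t → X) × X) :=
    Finset.univ.filter (fun P => IsPrestar Y P) with hPS
  set PC := Finset.univ.filter
    (fun Q : ((Fin t → X) × (Fin t → X) × X) × ((Fin t → X) × (Fin t → X) × X) ×
      ((Fin t → X) × (Fin t → X) × X) => IsPreconstellation Y Q) with hPC
  -- counting conversions
  have hcardPS : (Nat.card {P : (Fin t → X) × (Fin t → X) × X // IsPrestar Y P}) = PS.card := by
    rw [Nat.card_eq_fintype_card, Fintype.card_subtype]
  have hcardPC : (Nat.card {Q : ((Fin t → X) × (Fin t → X) × X) ×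
      ((Fin t → X) × (Fin t → X) × X) × ((Fin t → X) × (Fin t → X) × X) //
      IsPreconstellation Y Q}) = PC.card := by
    rw [Nat.card_eq_fintype_card, Fintype.card_subtype]
  -- Step A: prestar count bound
  have hStepA : PS.card ≤ A.card * (N * 3 ^ t) := by
    have hcardT : (A ×ˢ ((Finset.univ : Finset X) ×ˢ
        (Finset.univ : Finset (Fin t → Fin 3)))).card = A.card * (N * 3 ^ t) := by
      rw [Finset.card_product, Finset.card_product, Finset.card_univ, Finset.card_univ,
        Fintype.card_fun, Fintype.card_fin, Fintype.card_fin, hNdef]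
    rw [← hcardT]
    apply Finset.card_le_card_of_injOn
      (fun P => (P.1, P.2.2, fun i => if P.1 i + P.2.1 i = P.2.2 then (0 : Fin 3)
        else if P.1 i - P.2.1 i = P.2.2 then 1 else 2))
    · intro P hP
      rw [hPS, Finset.mem_coe, Finset.mem_filter] at hP
      simp only [Finset.mem_coe, Finset.mem_product, Finset.mem_univ, and_true, true_and]
      exact (hAmem _).2 (fun i => (hP.2 i).1)
    · rintro ⟨x, y, a⟩ hP ⟨x', y', a'⟩ hQ hfeq
      simp only [Finset.coe_filter, Set.mem_setOf_eq, hPS, Finset.mem_filter] at hP hQ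
      simp only [Prod.mk.injEq] at hfeq
      obtain ⟨h1, h2, h3⟩ := hfeq
      subst h1; subst h2
      refine Prod.ext rfl (Prod.ext ?_ rfl)
      funext i
      exact prestar_tag_recover (x i) (y i) (y' i) a (hP.2 i).2.2 (hQ.2 i).2.2 (congrFun h3 i)
  -- Step B: D injects into preconstellations
  have hStepB : D.card ≤ PC.card := by
    apply Finset.card_le_card_of_injOn (fun ρ =>
      ((ρ.1.1, ρ.2.1, ρ.1.1 i0 - ρ.2.1 i0),
       (ρ.1.2.1, ρ.2.2.1, ρ.1.2.1 i0 - ρ.2.2.1 i0),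
       (ρ.2.2.2, ρ.1.2.2, (ρ.1.1 i0 - ρ.2.1 i0) + (ρ.1.2.1 i0 - ρ.2.2.1 i0))))
    · rintro ⟨⟨u, v, w'⟩, ⟨p, qq, w⟩⟩ hρ
      rw [hD, Finset.mem_coe, Finset.mem_filter] at hρ
      obtain ⟨hmem, heq⟩ := hρ
      rw [hW] at hmem
      simp only [Finset.mem_product] at hmem
      obtain ⟨⟨hu, hv, hw'⟩, hp, hqq, hw⟩ := hmem
      rw [hΨ] at heq
      simp only [Prod.mk.injEq] at heq
      obtain ⟨hsum, hqu, hqv⟩ := heq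
      -- extract diagonal differences
      obtain ⟨d, hd⟩ := (QuotientAddGroup.eq).mp hqu
      obtain ⟨e, he⟩ := (QuotientAddGroup.eq).mp hqv
      have hdi : ∀ i : Fin t, (δ d) i = d := fun _ => rfl
      have hei : ∀ i : Fin t, (δ e) i = e := fun _ => rfl
      have hub : ∀ i : Fin t, u i - p i = u i0 - p i0 := by
        intro i
        have h1 : d = -u i + p i := by
          have := congrFun hd i; rw [hdi i] at this
          simpa using this
        have h2 : d = -u i0 + p i0 := by
          have := congrFun hd i0; rw [hdi i0] at this
          simpa using this
        calc u i - p i = -(-u i + p i) := by abel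
          _ = -(-u i0 + p i0) := by rw [← h1, ← h2]
          _ = u i0 - p i0 := by abel
      have hvc : ∀ i : Fin t, v i - qq i = v i0 - qq i0 := by
        intro i
        have h1 : e = -v i + qq i := by
          have := congrFun he i; rw [hei i] at this
          simpa using this
        have h2 : e = -v i0 + qq i0 := by
          have := congrFun he i0; rw [hei i0] at this
          simpa using this
        calc v i - qq i = -(-v i + qq i) := by abel
          _ = -(-v i0 + qq i0) := by rw [← h1, ← h2]
          _ = v i0 - qq i0 := by abel
      have hwrel : ∀ i : Fin t, w i - w' i = (u i0 - p i0) + (v i0 - qq i0) := by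
        intro i
        have ei : u i + v i + w' i = p i + qq i + w i := by
          have := congrFun hsum i; simpa using this
        have hwi : w i = u i + v i + w' i - p i - qq i := by rw [ei]; abel
        rw [← hub i, ← hvc i, hwi]; abel
      rw [hPC, Finset.mem_coe, Finset.mem_filter]
      refine ⟨Finset.mem_univ _, ?_, ?_, ?_, Equiv.refl _, rfl⟩
      · intro i
        exact ⟨(hAmem u).1 hu i, (hAmem p).1 hp i, Or.inr (Or.inl (hub i))⟩
      · intro i
        exact ⟨(hAmem v).1 hv i, (hAmem qq).1 hqq i, Or.inr (Or.inl (hvc i))⟩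
      · intro i
        exact ⟨(hAmem w).1 hw i, (hAmem w').1 hw' i, Or.inr (Or.inl (hwrel i))⟩
    · rintro ⟨⟨u, v, w'⟩, ⟨p, qq, w⟩⟩ _ ⟨⟨u2, v2, w2'⟩, ⟨p2, qq2, w2⟩⟩ _ h
      simp only [Prod.mk.injEq] at h
      obtain ⟨⟨h1, h2, _⟩, ⟨h3, h4, _⟩, h5, h6, _⟩ := h
      simp_all only [Prod.mk.injEq, and_self]
  -- Step C: D.card as a sum of squared fibre sizes
  have hStepC : D.card = ∑ z ∈ (Finset.univ :
      Finset ((Fin t → X) × ((Fin t → X) ⧸ H) × ((Fin t → X) ⧸ H))),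
      ((W.filter fun ω => Ψ ω = z).card) ^ 2 := by
    rw [hD, Finset.card_eq_sum_card_fiberwise
      (f := fun ρ => Ψ ρ.1) (t := Finset.univ) (fun x _ => Finset.mem_univ _)]
    refine Finset.sum_congr rfl fun z _ => ?_
    rw [sq, ← Finset.card_product]
    congr 1
    ext ρ
    simp only [Finset.mem_filter, Finset.mem_product]
    constructor
    · rintro ⟨⟨⟨hw1, hw2⟩, he⟩, hz⟩
      exact ⟨⟨hw1, hz⟩, hw2, he ▸ hz⟩
    · rintro ⟨⟨hw1, hz1⟩, hw2, hz2⟩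
      exact ⟨⟨⟨hw1, hw2⟩, hz1.trans hz2.symm⟩, hz1⟩
  have hfib : ∑ z ∈ (Finset.univ :
      Finset ((Fin t → X) × ((Fin t → X) ⧸ H) × ((Fin t → X) ⧸ H))),
      (W.filter fun ω => Ψ ω = z).card = W.card :=
    (Finset.card_eq_sum_card_fiberwise (fun x _ => Finset.mem_univ _)).symm
  have hWc : W.card = A.card ^ 3 := by
    rw [hW, Finset.card_product, Finset.card_product]; ring
  -- Step E: size of the quotient
  have hq : q * N = N ^ t := by
    have h1 : Nat.card (Fin t → X) = Nat.card ((Fin t → X) ⧸ H) * Nat.card H :=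
      AddSubgroup.card_eq_card_quotient_mul_card_addSubgroup H
    have h2 : Nat.card H = N := by
      rw [← Nat.card_congr (AddMonoidHom.ofInjective δinj).toEquiv,
        Nat.card_eq_fintype_card, hNdef]
    have h3 : Nat.card (Fin t → X) = N ^ t := by
      rw [Nat.card_eq_fintype_card, Fintype.card_fun, Fintype.card_fin, hNdef]
    rw [h3, h2, Nat.card_eq_fintype_card, ← hqdef] at h1
    omega
  -- Cauchy–Schwarz
  have hIdxcard : (Finset.univ :
      Finset ((Fin t → X) × ((Fin t → X) ⧸ H) × ((Fin t → X) ⧸ H))).card = N ^ t * (q * q) := by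
    rw [Finset.card_univ, Fintype.card_prod, Fintype.card_prod, Fintype.card_fun,
      Fintype.card_fin, hNdef, ← hqdef]
  have hCS : ((A.card : ℝ) ^ 3) ^ 2 ≤ ((N : ℝ) ^ t * ((q : ℝ) * q)) * (D.card : ℝ) := by
    have h := sq_sum_le_card_mul_sum_sq (s := (Finset.univ :
      Finset ((Fin t → X) × ((Fin t → X) ⧸ H) × ((Fin t → X) ⧸ H))))
      (f := fun z => ((W.filter fun ω => Ψ ω = z).card : ℝ))
    rw [← Nat.cast_sum] at h
    rw [hfib, hWc] at h
    have hx : ∑ z ∈ (Finset.univ :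
        Finset ((Fin t → X) × ((Fin t → X) ⧸ H) × ((Fin t → X) ⧸ H))),
        (((W.filter fun ω => Ψ ω = z).card : ℝ)) ^ 2 = (D.card : ℝ) := by
      rw [hStepC]; push_cast; ring
    rw [hx, hIdxcard] at h
    calc ((A.card : ℝ) ^ 3) ^ 2 = ((A.card ^ 3 : ℕ) : ℝ) ^ 2 := by push_cast; ring
      _ ≤ ((N ^ t * (q * q) : ℕ) : ℝ) * (D.card : ℝ) := h
      _ = ((N : ℝ) ^ t * ((q : ℝ) * q)) * (D.card : ℝ) := by push_cast; ring
  -- Final arithmetic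
  have hNr : (0 : ℝ) < (N : ℝ) := by exact_mod_cast hN0
  have hPSr : β * (N : ℝ) ^ (t + 1) ≤ (PS.card : ℝ) := by
    rw [← hcardPS]; exact hS
  have hAr : (PS.card : ℝ) ≤ (A.card : ℝ) * ((N : ℝ) * 3 ^ t) := by
    exact_mod_cast hStepA
  have step1 : β * (N : ℝ) ^ t ≤ (A.card : ℝ) * 3 ^ t := by
    have h2 : (β * (N : ℝ) ^ t) * N ≤ ((A.card : ℝ) * 3 ^ t) * N := by
      calc (β * (N : ℝ) ^ t) * N = β * (N : ℝ) ^ (t + 1) := by ring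
        _ ≤ (PS.card : ℝ) := hPSr
        _ ≤ (A.card : ℝ) * ((N : ℝ) * 3 ^ t) := hAr
        _ = ((A.card : ℝ) * 3 ^ t) * N := by ring
    exact le_of_mul_le_mul_right h2 hNr
  have step2 : β ^ 6 * ((N : ℝ) ^ t) ^ 6 ≤ (A.card : ℝ) ^ 6 * ((3 : ℝ) ^ t) ^ 6 := by
    have h := pow_le_pow_left₀ (by positivity) step1 6
    calc β ^ 6 * ((N : ℝ) ^ t) ^ 6 = (β * (N : ℝ) ^ t) ^ 6 := by ring
      _ ≤ ((A.card : ℝ) * 3 ^ t) ^ 6 := h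
      _ = (A.card : ℝ) ^ 6 * ((3 : ℝ) ^ t) ^ 6 := by ring
  have hqr : (q : ℝ) * (N : ℝ) = (N : ℝ) ^ t := by exact_mod_cast hq
  have key : (A.card : ℝ) ^ 6 * (N : ℝ) ^ 2 ≤ ((N : ℝ) ^ t) ^ 3 * (D.card : ℝ) := by
    calc (A.card : ℝ) ^ 6 * (N : ℝ) ^ 2 = ((A.card : ℝ) ^ 3) ^ 2 * (N : ℝ) ^ 2 := by ring
      _ ≤ (((N : ℝ) ^ t * ((q : ℝ) * q)) * (D.card : ℝ)) * (N : ℝ) ^ 2 :=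
          mul_le_mul_of_nonneg_right hCS (by positivity)
      _ = (N : ℝ) ^ t * (((q : ℝ) * N) * ((q : ℝ) * N)) * (D.card : ℝ) := by ring
      _ = ((N : ℝ) ^ t) ^ 3 * (D.card : ℝ) := by rw [hqr]; ring
  have hDC : (D.card : ℝ) ≤ (PC.card : ℝ) := by exact_mod_cast hStepB
  rw [hcardPC]
  have hexp : (N : ℝ) ^ (3 * t + 2) = ((N : ℝ) ^ t) ^ 3 * (N : ℝ) ^ 2 := by
    rw [pow_add, mul_comm 3 t, pow_mul]
  rw [hexp]
  have hT3 : (0 : ℝ) < ((3 : ℝ) ^ t) ^ 6 := by positivity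
  have hm3 : (0 : ℝ) < ((N : ℝ) ^ t) ^ 3 := by positivity
  have goal2 : β ^ 6 * (((N : ℝ) ^ t) ^ 3 * (N : ℝ) ^ 2) ≤ (D.card : ℝ) * ((3 : ℝ) ^ t) ^ 6 := by
    have big : (β ^ 6 * (((N : ℝ) ^ t) ^ 3 * (N : ℝ) ^ 2)) * ((N : ℝ) ^ t) ^ 3 ≤
        ((D.card : ℝ) * ((3 : ℝ) ^ t) ^ 6) * ((N : ℝ) ^ t) ^ 3 := by
      calc (β ^ 6 * (((N : ℝ) ^ t) ^ 3 * (N : ℝ) ^ 2)) * ((N : ℝ) ^ t) ^ 3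
          = (β ^ 6 * ((N : ℝ) ^ t) ^ 6) * (N : ℝ) ^ 2 := by ring
        _ ≤ ((A.card : ℝ) ^ 6 * ((3 : ℝ) ^ t) ^ 6) * (N : ℝ) ^ 2 :=
            mul_le_mul_of_nonneg_right step2 (by positivity)
        _ = ((A.card : ℝ) ^ 6 * (N : ℝ) ^ 2) * ((3 : ℝ) ^ t) ^ 6 := by ring
        _ ≤ (((N : ℝ) ^ t) ^ 3 * (D.card : ℝ)) * ((3 : ℝ) ^ t) ^ 6 :=
            mul_le_mul_of_nonneg_right key (by positivity)
        _ = ((D.card : ℝ) * ((3 : ℝ) ^ t) ^ 6) * ((N : ℝ) ^ t) ^ 3 := by ring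
    exact le_of_mul_le_mul_right big hm3
  calc (β / 3 ^ t) ^ 6 * (((N : ℝ) ^ t) ^ 3 * (N : ℝ) ^ 2)
      = (β ^ 6 * (((N : ℝ) ^ t) ^ 3 * (N : ℝ) ^ 2)) / ((3 : ℝ) ^ t) ^ 6 := by
        rw [div_pow]; ring
    _ ≤ (D.card : ℝ) := by rw [div_le_iff₀ hT3]; exact goal2
    _ ≤ (PC.card : ℝ) := hDC
end

section
/- Let s ≥ 3 and let (𝓗_n) be a sequence of s-uniform hypergraphs with v(𝓗_n) → ∞ and Δ₂(𝓗_n) = O(1), and let p_n ∈ [0,1] satisfy p_n = O(v(𝓗_n)^{−1/(s−1)}). Then the probability that V(𝓗_n)_{p_n} contains a clot of 𝓗_n tends to 0 as n → ∞, where a set U ⊆ V(𝓗_n) is said to contain a clot if there exists A ⊆ U with |A| = 2s−3 such that for every (s−1)-element subset A' ⊆ A there exist two distinct vertices v₁, v₂ ∈ U ∖ A with both A' ∪ {v₁} and A' ∪ {v₂} edges of 𝓗_n. -/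
open Filter
open scoped Classical

/-- The degree of the vertex set `T` in the hypergraph `H`: the number of edges
of `H` containing `T`. -/
noncomputable def degH {V : Type*} (H : Finset (Finset V)) (T : Finset V) : ℕ :=
  (H.filter fun e => T ⊆ e).card

/-- `Δ_t(H)`: the maximum degree of a `t`-element vertex set in `H`. -/
noncomputable def maxDeg {V : Type*} [Fintype V] (H : Finset (Finset V)) (t : ℕ) : ℕ :=
  (Finset.univ.filter fun T : Finset V => T.card = t).sup (degH H)

/-- `p_𝓗 := (v(𝓗)/e(𝓗))^{1/(s−1)}`. -/
noncomputable def pH {V : Type*} [Fintype V] (s : ℕ) (H : Finset (Finset V)) : ℝ :=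
  ((Fintype.card V : ℝ) / (H.card : ℝ)) ^ (1 / ((s : ℝ) - 1))

/-- A sequence of `s`-uniform hypergraphs is non-clustered:
`Δ₁(𝓗_n) = O(e(𝓗_n)/v(𝓗_n))` and, for each `t ∈ {2,…,s−1}`,
`Δ_t(𝓗_n) = o(p_{𝓗_n}^{t−1}·e(𝓗_n)/v(𝓗_n))`. -/
def NonClustered (s : ℕ) (V : ℕ → Type) [∀ n, Fintype (V n)]
    (H : ∀ n, Finset (Finset (V n))) : Prop :=
  (∃ C : ℝ, ∀ n, (maxDeg (H n) 1 : ℝ) ≤ C * ((H n).card : ℝ) / (Fintype.card (V n) : ℝ)) ∧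
  ∀ t : ℕ, 2 ≤ t → t ≤ s - 1 → ∀ ε : ℝ, 0 < ε →
    ∀ᶠ n in atTop, (maxDeg (H n) t : ℝ) ≤
      ε * pH s (H n) ^ (t - 1) * ((H n).card : ℝ) / (Fintype.card (V n) : ℝ)


open Classical in
/-- `U` contains a clot of the `s`-uniform hypergraph `H`: there is a nucleus
`A ⊆ U` of `2s−3` vertices such that every `(s−1)`-element subset `A' ⊆ A` has
two distinct extension vertices `v₁, v₂ ∈ U ∖ A` with `A' ∪ {v₁}` and
`A' ∪ {v₂}` edges of `H`. -/
noncomputable def ContainsClot {V : Type*} (s : ℕ) (H : Finset (Finset V))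
    (U : Finset V) : Prop :=
  ∃ A ⊆ U, A.card = 2 * s - 3 ∧ ∀ A' ⊆ A, A'.card = s - 1 →
    ∃ v₁ v₂ : V, v₁ ∈ U ∧ v₂ ∈ U ∧ v₁ ∉ A ∧ v₂ ∉ A ∧ v₁ ≠ v₂ ∧
      insert v₁ A' ∈ H ∧ insert v₂ A' ∈ H


/- ### Auxiliary machinery for the proof -/

section ProbLemmas
variable {α : Type*} [Fintype α]
open Finset

lemma weight_nonneg {p : ℝ} (h0 : 0 ≤ p) (h1 : p ≤ 1) (a b : ℕ) :
    0 ≤ p ^ a * (1 - p) ^ b :=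
  mul_nonneg (pow_nonneg h0 _) (pow_nonneg (by linarith) _)

lemma probSub_nonneg {p : ℝ} (h0 : 0 ≤ p) (h1 : p ≤ 1) (P : Finset α → Prop) :
    0 ≤ probSub (univ : Finset α) p P := by
  refine Finset.sum_nonneg fun U _ => ?_
  split
  · exact weight_nonneg h0 h1 _ _
  · exact le_refl _

lemma probSub_or_le {p : ℝ} (h0 : 0 ≤ p) (h1 : p ≤ 1) {P Q R : Finset α → Prop}
    (h : ∀ U : Finset α, P U → Q U ∨ R U) :
    probSub (univ : Finset α) p P ≤
      probSub (univ : Finset α) p Q + probSub (univ : Finset α) p R := by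
  unfold probSub
  rw [← Finset.sum_add_distrib]
  refine Finset.sum_le_sum fun U _ => ?_
  by_cases hP : P U
  · rcases h U hP with hQ | hR
    · rw [if_pos hP, if_pos hQ]
      have : (0:ℝ) ≤ if R U then p ^ U.card * (1 - p) ^ ((univ:Finset α).card - U.card) else 0 := by
        split
        · exact weight_nonneg h0 h1 _ _
        · exact le_refl _
      linarith
    · rw [if_pos hP, if_pos hR]
      have : (0:ℝ) ≤ if Q U then p ^ U.card * (1 - p) ^ ((univ:Finset α).card - U.card) else 0 := by
        split
        · exact weight_nonneg h0 h1 _ _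
        · exact le_refl _
      linarith
  · rw [if_neg hP]
    have h1' : (0:ℝ) ≤ if Q U then p ^ U.card * (1 - p) ^ ((univ:Finset α).card - U.card) else 0 := by
      split
      · exact weight_nonneg h0 h1 _ _
      · exact le_refl _
    have h2' : (0:ℝ) ≤ if R U then p ^ U.card * (1 - p) ^ ((univ:Finset α).card - U.card) else 0 := by
      split
      · exact weight_nonneg h0 h1 _ _
      · exact le_refl _
    linarith

lemma sum_powerset_weight (p : ℝ) (Y : Finset α) :
    ∑ T ∈ Y.powerset, p ^ T.card * (1 - p) ^ (Y.card - T.card) = 1 := by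
  calc ∑ T ∈ Y.powerset, p ^ T.card * (1 - p) ^ (Y.card - T.card)
      = ∑ T ∈ Y.powerset, (∏ _i ∈ T, p) * ∏ _i ∈ Y \ T, (1 - p) := by
        refine Finset.sum_congr rfl fun T hT => ?_
        rw [prod_const, prod_const, card_sdiff_of_subset (mem_powerset.mp hT)]
    _ = ∏ _i ∈ Y, (p + (1 - p)) := (Finset.prod_add _ _ _).symm
    _ = 1 := by simp

lemma probSub_superset (p : ℝ) (S : Finset α) :
    probSub (univ : Finset α) p (fun U => S ⊆ U) = p ^ S.card := by
  have h1 : probSub (univ : Finset α) p (fun U => S ⊆ U)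
      = ∑ U ∈ (univ : Finset α).powerset.filter (fun U => S ⊆ U),
          p ^ U.card * (1 - p) ^ ((univ : Finset α).card - U.card) := by
    rw [Finset.sum_filter]
    unfold probSub
    refine Finset.sum_congr rfl fun U _ => ?_
    split_ifs <;> rfl
  rw [h1]
  have h2 : ∑ U ∈ (univ : Finset α).powerset.filter (fun U => S ⊆ U),
          p ^ U.card * (1 - p) ^ ((univ : Finset α).card - U.card)
      = ∑ T ∈ ((univ : Finset α) \ S).powerset,
          p ^ S.card * (p ^ T.card * (1 - p) ^ (((univ : Finset α) \ S).card - T.card)) := by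
    refine Finset.sum_nbij' (fun U => U \ S) (fun T => S ∪ T) ?_ ?_ ?_ ?_ ?_
    · intro U hU
      rw [mem_filter, mem_powerset] at hU
      rw [mem_powerset]
      exact sdiff_subset_sdiff hU.1 (le_refl _)
    · intro T hT
      rw [mem_powerset] at hT
      rw [mem_filter, mem_powerset]
      exact ⟨subset_univ _, subset_union_left⟩
    · intro U hU
      rw [mem_filter] at hU
      exact union_sdiff_of_subset hU.2
    · intro T hT
      rw [mem_powerset] at hT
      have hd : Disjoint S T := by
        refine disjoint_left.mpr fun a haS haT => ?_
        exact (mem_sdiff.mp (hT haT)).2 haS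
      show (S ∪ T) \ S = T
      rw [union_sdiff_cancel_left hd]
    · intro U hU
      rw [mem_filter, mem_powerset] at hU
      have hSU : S ⊆ U := hU.2
      have c1 : U.card = S.card + (U \ S).card := by
        rw [add_comm, card_sdiff_add_card_eq_card hSU]
      have c2 : ((univ : Finset α) \ S).card = (univ : Finset α).card - S.card :=
        card_sdiff_of_subset (subset_univ _)
      have c3 : (univ : Finset α).card - U.card
          = ((univ : Finset α) \ S).card - (U \ S).card := by
        have hUu : U.card ≤ (univ : Finset α).card := card_le_card (subset_univ _)
        have hSc : S.card ≤ U.card := card_le_card hSU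
        omega
      show p ^ U.card * (1 - p) ^ ((univ : Finset α).card - U.card)
          = p ^ S.card * (p ^ (U \ S).card * (1 - p) ^ (((univ : Finset α) \ S).card - (U \ S).card))
      have c4 : (univ : Finset α).card - U.card
          = ((univ : Finset α) \ S).card - (U \ S).card := c3
      rw [c1, pow_add, mul_assoc]
      have c5 : (univ : Finset α).card - (S.card + (U \ S).card)
          = ((univ : Finset α) \ S).card - (U \ S).card := by omega
      rw [c5]
  rw [h2, ← Finset.mul_sum, sum_powerset_weight, mul_one]

lemma probSub_le_card_mul_pow {p : ℝ} (h0 : 0 ≤ p) (h1 : p ≤ 1) (P : Finset α → Prop)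
    (𝒮 : Finset (Finset α)) (N : ℕ) (hcard : ∀ S ∈ 𝒮, N ≤ S.card)
    (hP : ∀ U : Finset α, P U → ∃ S ∈ 𝒮, S ⊆ U) :
    probSub (univ : Finset α) p P ≤ (𝒮.card : ℝ) * p ^ N := by
  have step1 : probSub (univ : Finset α) p P
      ≤ ∑ S ∈ 𝒮, probSub (univ : Finset α) p (fun U => S ⊆ U) := by
    unfold probSub
    rw [Finset.sum_comm]
    beta_reduce
    refine Finset.sum_le_sum fun U hU => ?_
    by_cases h : P U
    · obtain ⟨S₀, hS₀, hsub₀⟩ := hP U h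
      rw [if_pos h]
      refine le_trans (le_of_eq (if_pos hsub₀ :
          @ite ℝ (S₀ ⊆ U) (Classical.propDecidable _)
            (p ^ U.card * (1 - p) ^ ((univ : Finset α).card - U.card)) 0
          = _).symm) ?_
      refine Finset.single_le_sum
        (f := fun S => @ite ℝ (S ⊆ U) (Classical.propDecidable _)
          (p ^ U.card * (1 - p) ^ ((univ : Finset α).card - U.card)) 0) (fun S _ => ?_) hS₀
      split
      · exact weight_nonneg h0 h1 _ _
      · exact le_refl _
    · rw [if_neg h]
      refine Finset.sum_nonneg fun S _ => ?_
      split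
      · exact weight_nonneg h0 h1 _ _
      · exact le_refl _
  have step2 : ∑ S ∈ 𝒮, probSub (univ : Finset α) p (fun U => S ⊆ U)
      ≤ ∑ _S ∈ 𝒮, p ^ N := by
    refine Finset.sum_le_sum fun S hS => ?_
    rw [probSub_superset]
    exact pow_le_pow_of_le_one h0 h1 (hcard S hS)
  calc probSub (univ : Finset α) p P ≤ _ := step1
    _ ≤ _ := step2
    _ = (𝒮.card : ℝ) * p ^ N := by rw [Finset.sum_const, nsmul_eq_mul]

end ProbLemmas

section CountLemmas
variable {α : Type*} [Fintype α]
open Finset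

/-- Edges of `H` meeting `W` in at least two vertices. -/
noncomputable def D2 (H : Finset (Finset α)) (W : Finset α) : Finset (Finset α) :=
  H.filter fun e => 2 ≤ (e ∩ W).card

/-- `W` together with all edges meeting `W` in at least two vertices. -/
noncomputable def Ball (H : Finset (Finset α)) (W : Finset α) : Finset α :=
  W ∪ (D2 H W).biUnion id

lemma subset_Ball (H : Finset (Finset α)) (W : Finset α) : W ⊆ Ball H W :=
  subset_union_left

lemma edge_subset_Ball {H : Finset (Finset α)} {W e : Finset α} (he : e ∈ H)
    (h2 : 2 ≤ (e ∩ W).card) : e ⊆ Ball H W := by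
  intro z hz
  exact mem_union_right _ (mem_biUnion.mpr ⟨e, mem_filter.mpr ⟨he, h2⟩, hz⟩)

lemma deg_pair_le {H : Finset (Finset α)} {x y : α} (hxy : x ≠ y) :
    (H.filter fun e => x ∈ e ∧ y ∈ e ∧ x ≠ y).card ≤ maxDeg H 2 := by
  have hsub : (H.filter fun e => x ∈ e ∧ y ∈ e ∧ x ≠ y)
      ⊆ H.filter fun e => ({x, y} : Finset α) ⊆ e := by
    intro e he
    rw [mem_filter] at he ⊢
    exact ⟨he.1, insert_subset he.2.1 (singleton_subset_iff.mpr he.2.2.1)⟩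
  refine le_trans (card_le_card hsub) ?_
  have : degH H {x, y} ≤ maxDeg H 2 :=
    Finset.le_sup (mem_filter.mpr ⟨mem_univ _, card_pair hxy⟩)
  exact this

lemma card_D2_le (H : Finset (Finset α)) (W : Finset α) :
    (D2 H W).card ≤ W.card ^ 2 * maxDeg H 2 := by
  have hsub : D2 H W ⊆ (W ×ˢ W).biUnion
      (fun q => H.filter fun e => q.1 ∈ e ∧ q.2 ∈ e ∧ q.1 ≠ q.2) := by
    intro e he
    rw [D2, mem_filter] at he
    obtain ⟨x, hx, y, hy, hxy⟩ := Finset.one_lt_card.mp he.2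
    rw [mem_inter] at hx hy
    exact mem_biUnion.mpr ⟨(x, y), mem_product.mpr ⟨hx.2, hy.2⟩,
      mem_filter.mpr ⟨he.1, hx.1, hy.1, hxy⟩⟩
  refine le_trans (card_le_card hsub) (le_trans (card_biUnion_le) ?_)
  refine le_trans (Finset.sum_le_card_nsmul _ _ (maxDeg H 2) fun q _ => ?_) ?_
  · by_cases hq : q.1 = q.2
    · have : (H.filter fun e => q.1 ∈ e ∧ q.2 ∈ e ∧ q.1 ≠ q.2) = ∅ := by
        refine filter_false_of_mem fun e _ => ?_
        rintro ⟨_, _, hne⟩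
        exact hne hq
      simp [this]
    · exact deg_pair_le hq
  · rw [smul_eq_mul, card_product, sq]

lemma card_edges_le (H : Finset (Finset α)) (h2 : ∀ e ∈ H, 2 ≤ e.card) :
    H.card ≤ (Fintype.card α) ^ 2 * maxDeg H 2 := by
  have : H ⊆ D2 H univ := by
    intro e he
    rw [D2, mem_filter]
    rw [inter_univ]
    exact ⟨he, h2 e he⟩
  refine le_trans (card_le_card this) ?_
  have := card_D2_le H (univ : Finset α)
  rwa [card_univ] at this

lemma card_Ball_le (H : Finset (Finset α)) (W : Finset α) (s : ℕ)
    (hs : ∀ e ∈ H, e.card ≤ s) :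
    (Ball H W).card ≤ W.card + W.card ^ 2 * maxDeg H 2 * s := by
  refine le_trans (card_union_le _ _) (Nat.add_le_add_left ?_ _)
  refine le_trans card_biUnion_le ?_
  refine le_trans (Finset.sum_le_card_nsmul _ _ s fun e he => ?_) ?_
  · exact hs e (mem_filter.mp he).1
  · rw [smul_eq_mul]
    exact Nat.mul_le_mul_right _ (card_D2_le H W)

lemma card_D1_le (H : Finset (Finset α)) (h2 : ∀ e ∈ H, 2 ≤ e.card) (W : Finset α) :
    (H.filter fun e => (e ∩ W).Nonempty).card
      ≤ W.card * (Fintype.card α * maxDeg H 2) := by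
  have hsub : (H.filter fun e => (e ∩ W).Nonempty) ⊆ W.biUnion
      (fun x => (univ : Finset α).biUnion
        (fun y => H.filter fun e => x ∈ e ∧ y ∈ e ∧ x ≠ y)) := by
    intro e he
    rw [mem_filter] at he
    obtain ⟨x, hx⟩ := he.2
    rw [mem_inter] at hx
    obtain ⟨y, hy, hyx⟩ := Finset.exists_mem_ne (h2 e he.1) x
    refine mem_biUnion.mpr ⟨x, hx.2, mem_biUnion.mpr ⟨y, mem_univ _,
      mem_filter.mpr ⟨he.1, hx.1, hy, hyx.symm⟩⟩⟩
  refine le_trans (card_le_card hsub) (le_trans card_biUnion_le ?_)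
  refine le_trans (Finset.sum_le_card_nsmul _ _ (Fintype.card α * maxDeg H 2)
    (fun x _ => le_trans card_biUnion_le ?_)) ?_
  · refine le_trans (Finset.sum_le_card_nsmul _ _ (maxDeg H 2) fun y _ => ?_) ?_
    swap
    · rw [smul_eq_mul, card_univ]
    by_cases hq : x = y
    · have : (H.filter fun e => x ∈ e ∧ y ∈ e ∧ x ≠ y) = ∅ := by
        refine filter_false_of_mem fun e _ => ?_
        rintro ⟨_, _, hne⟩
        exact hne hq
      simp [this]
    · exact deg_pair_le hq
  · rw [smul_eq_mul]

end CountLemmas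


section Witness
variable {α : Type*} [Fintype α]
open Finset

lemma witness_ge4 {s : ℕ} (hs : 4 ≤ s) {H : Finset (Finset α)} {U : Finset α}
    (h : ContainsClot s H U) :
    ∃ S : Finset α, S ⊆ U ∧ S.card = 2 * s - 1 ∧
      ∃ e₀ ∈ H, S ⊆ Ball H (Ball H e₀) := by
  obtain ⟨A, hAU, hAcard, hclot⟩ := h
  obtain ⟨A₁, hA₁A, hA₁card⟩ := Finset.exists_subset_card_eq (s := A) (n := s - 1) (by omega)
  obtain ⟨v₁, w₁, hv₁U, hw₁U, hv₁A, hw₁A, hvw, he₀, he₁⟩ := hclot A₁ hA₁A hA₁card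
  set e₀ := insert v₁ A₁ with he₀def
  have hA₁e₀ : A₁ ⊆ e₀ := subset_insert _ _
  have hBalls : Ball H e₀ ⊆ Ball H (Ball H e₀) := subset_Ball _ _
  refine ⟨insert v₁ (insert w₁ A), ?_, ?_, e₀, he₀, ?_⟩
  · exact insert_subset hv₁U (insert_subset hw₁U hAU)
  · rw [card_insert_of_notMem (by simp [hv₁A, hvw]), card_insert_of_notMem hw₁A]
    omega
  · intro z hz
    rw [mem_insert, mem_insert] at hz
    have he₁Ball : (insert w₁ A₁ : Finset α) ⊆ Ball H e₀ := by
      refine edge_subset_Ball he₁ ?_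
      have : A₁ ⊆ insert w₁ A₁ ∩ e₀ := subset_inter (subset_insert _ _) hA₁e₀
      have := card_le_card this
      omega
    rcases hz with rfl | rfl | hzA
    · exact hBalls (subset_Ball _ _ (mem_insert_self _ _))
    · exact hBalls (he₁Ball (mem_insert_self _ _))
    · by_cases hzA₁ : z ∈ A₁
      · exact hBalls (subset_Ball _ _ (hA₁e₀ hzA₁))
      · obtain ⟨B, hBA₁, hBcard⟩ := Finset.exists_subset_card_eq (s := A₁) (n := s - 2) (by omega)
        have hzB : z ∉ B := fun hzB => hzA₁ (hBA₁ hzB)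
        have hA'card : (insert z B).card = s - 1 := by
          rw [card_insert_of_notMem hzB]
          omega
        have hA'A : insert z B ⊆ A := insert_subset hzA (hBA₁.trans hA₁A)
        obtain ⟨u₁, u₂, hu₁U, hu₂U, hu₁A, hu₂A, huu, hf₁, hf₂⟩ :=
          hclot (insert z B) hA'A hA'card
        refine hBalls (edge_subset_Ball hf₁ ?_ (mem_insert_of_mem (mem_insert_self _ _)))
        have hBsub : B ⊆ insert u₁ (insert z B) ∩ e₀ :=
          subset_inter ((subset_insert _ _).trans (subset_insert _ _)) (hBA₁.trans hA₁e₀)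
        have := card_le_card hBsub
        omega

lemma witness_3 {H : Finset (Finset α)} {U : Finset α}
    (h : ContainsClot 3 H U) :
    (∃ S : Finset α, S ⊆ U ∧ S.card = 5 ∧ ∃ e₀ ∈ H, S ⊆ Ball H (Ball H e₀)) ∨
    (∃ S : Finset α, S ⊆ U ∧ S.card = 7 ∧ ∃ e₀ ∈ H, ∃ e₁ ∈ H,
      (e₀ ∩ e₁).Nonempty ∧ S ⊆ Ball H (e₀ ∪ e₁)) := by
  obtain ⟨A, hAU, hAcard, hclot⟩ := h
  have hAcard' : A.card = 3 := hAcard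
  obtain ⟨A₁, hA₁A, hA₁card⟩ := Finset.exists_subset_card_eq (s := A) (n := 2) (by omega)
  obtain ⟨v, w, hvU, hwU, hvA, hwA, hvw, he₀, he₁⟩ := hclot A₁ hA₁A (by omega)
  set e₀ := insert v A₁ with he₀def
  set e₁ := insert w A₁ with he₁def
  have hA₁e₀ : A₁ ⊆ e₀ := subset_insert _ _
  have hcard1 : (A \ A₁).card = 1 := by rw [card_sdiff_of_subset hA₁A]; omega
  obtain ⟨a₃, ha₃⟩ := Finset.card_eq_one.mp hcard1
  have ha₃mem : a₃ ∈ A \ A₁ := by rw [ha₃]; exact mem_singleton_self _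
  have ha₃A : a₃ ∈ A := (mem_sdiff.mp ha₃mem).1
  have ha₃A₁ : a₃ ∉ A₁ := (mem_sdiff.mp ha₃mem).2
  have hAsplit : ∀ a ∈ A, a ∈ A₁ ∨ a = a₃ := by
    intro a haA
    by_cases h' : a ∈ A₁
    · exact Or.inl h'
    · right
      have : a ∈ A \ A₁ := mem_sdiff.mpr ⟨haA, h'⟩
      rw [ha₃] at this
      exact mem_singleton.mp this
  obtain ⟨a₁, ha₁⟩ : A₁.Nonempty := card_pos.mp (by omega)
  have ha₁A : a₁ ∈ A := hA₁A ha₁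
  have ha₁a₃ : a₃ ≠ a₁ := fun hh => ha₃A₁ (hh ▸ ha₁)
  set A₂ : Finset α := insert a₃ {a₁} with hA₂def
  have hA₂card : A₂.card = 2 := card_pair ha₁a₃
  have hA₂A : A₂ ⊆ A := insert_subset ha₃A (singleton_subset_iff.mpr ha₁A)
  obtain ⟨x, y, hxU, hyU, hxA, hyA, hxy, hfx, hfy⟩ := hclot A₂ hA₂A (by omega)
  have ha₁A₂ : a₁ ∈ A₂ := mem_insert_of_mem (mem_singleton_self _)
  have ha₃A₂ : a₃ ∈ A₂ := mem_insert_self _ _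
  have he₁D2 : ∀ W : Finset α, e₀ ⊆ W → e₁ ∈ D2 H W := by
    intro W hW
    rw [D2, mem_filter]
    refine ⟨he₁, ?_⟩
    have : A₁ ⊆ e₁ ∩ W := subset_inter (subset_insert _ _) ((hA₁e₀.trans hW))
    have := card_le_card this
    omega
  by_cases hcase : x ∈ e₀ ∪ e₁ ∨ y ∈ e₀ ∪ e₁
  · left
    -- use the extension u ∈ {x,y} that lies in e₀ ∪ e₁
    obtain ⟨u, huA, hu01, hfu⟩ : ∃ u, u ∉ A ∧ u ∈ e₀ ∪ e₁ ∧ insert u A₂ ∈ H := by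
      rcases hcase with h' | h'
      · exact ⟨x, hxA, h', hfx⟩
      · exact ⟨y, hyA, h', hfy⟩
    refine ⟨insert v (insert w A), ?_, ?_, e₀, he₀, ?_⟩
    · exact insert_subset hvU (insert_subset hwU hAU)
    · rw [card_insert_of_notMem (by simp [hvA, hvw]), card_insert_of_notMem hwA]
      omega
    · have hBalls : Ball H e₀ ⊆ Ball H (Ball H e₀) := subset_Ball _ _
      have he₁Ball : (e₁ : Finset α) ⊆ Ball H e₀ :=
        edge_subset_Ball he₁ (mem_filter.mp (he₁D2 e₀ (le_refl _))).2
      have he₀Ball : (e₀ : Finset α) ⊆ Ball H e₀ := subset_Ball _ _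
      have huBall : u ∈ Ball H e₀ := by
        rcases mem_union.mp hu01 with h' | h'
        · exact he₀Ball h'
        · exact he₁Ball h'
      have hfuBall : (insert u A₂ : Finset α) ⊆ Ball H (Ball H e₀) := by
        refine edge_subset_Ball hfu ?_
        have hpair : ({a₁, u} : Finset α) ⊆ insert u A₂ ∩ Ball H e₀ := by
          refine insert_subset (mem_inter.mpr ⟨mem_insert_of_mem ha₁A₂,
            he₀Ball (hA₁e₀ ha₁)⟩) (singleton_subset_iff.mpr
            (mem_inter.mpr ⟨mem_insert_self _ _, huBall⟩))
        have hne : a₁ ≠ u := fun hh => huA (hh ▸ ha₁A)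
        have := card_le_card hpair
        rw [card_pair hne] at this
        omega
      intro z hz
      rw [mem_insert, mem_insert] at hz
      rcases hz with rfl | rfl | hzA
      · exact hBalls (he₀Ball (mem_insert_self _ _))
      · exact hBalls (he₁Ball (mem_insert_self _ _))
      · rcases hAsplit z hzA with hz₁ | rfl
        · exact hBalls (he₀Ball (hA₁e₀ hz₁))
        · exact hfuBall (mem_insert_of_mem ha₃A₂)
  · right
    push_neg at hcase
    obtain ⟨hx01, hy01⟩ := hcase
    set fx : Finset α := insert x A₂ with hfxdef
    have ha₁fx : a₁ ∈ fx := mem_insert_of_mem ha₁A₂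
    have ha₃fx : a₃ ∈ fx := mem_insert_of_mem ha₃A₂
    have hxfx : x ∈ fx := mem_insert_self _ _
    have hvx : v ≠ x := fun hh => hx01 (mem_union_left _ (hh ▸ mem_insert_self v A₁))
    have hwx : w ≠ x := fun hh => hx01 (mem_union_right _ (hh ▸ mem_insert_self w A₁))
    have hvy : v ≠ y := fun hh => hy01 (mem_union_left _ (hh ▸ mem_insert_self v A₁))
    have hwy : w ≠ y := fun hh => hy01 (mem_union_right _ (hh ▸ mem_insert_self w A₁))
    refine ⟨insert v (insert w (insert x (insert y A))), ?_, ?_, e₀, he₀, fx, hfx, ?_, ?_⟩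
    · exact insert_subset hvU (insert_subset hwU (insert_subset hxU
        (insert_subset hyU hAU)))
    · rw [card_insert_of_notMem (by simp [hvA, hvw, hvx, hvy]),
        card_insert_of_notMem (by simp [hwA, hwx, hwy]),
        card_insert_of_notMem (by simp [hxA, hxy]),
        card_insert_of_notMem hyA]
      omega
    · exact ⟨a₁, mem_inter.mpr ⟨hA₁e₀ ha₁, ha₁fx⟩⟩
    · -- S ⊆ Ball H (e₀ ∪ fx)
      have hW : e₀ ⊆ e₀ ∪ fx := subset_union_left
      have hWBall : (e₀ ∪ fx : Finset α) ⊆ Ball H (e₀ ∪ fx) := subset_Ball _ _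
      have he₁Ball : (e₁ : Finset α) ⊆ Ball H (e₀ ∪ fx) :=
        edge_subset_Ball he₁ (mem_filter.mp (he₁D2 _ hW)).2
      have hfyBall : (insert y A₂ : Finset α) ⊆ Ball H (e₀ ∪ fx) := by
        refine edge_subset_Ball hfy ?_
        have hpair : A₂ ⊆ insert y A₂ ∩ (e₀ ∪ fx) := by
          refine subset_inter (subset_insert _ _) ?_
          intro t ht
          exact mem_union_right _ ((subset_insert _ _) ht)
        have := card_le_card hpair
        omega
      intro z hz
      rw [mem_insert, mem_insert, mem_insert, mem_insert] at hz
      rcases hz with rfl | rfl | rfl | rfl | hzA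
      · exact hWBall (mem_union_left _ (mem_insert_self _ _))
      · exact he₁Ball (mem_insert_self _ _)
      · exact hWBall (mem_union_right _ hxfx)
      · exact hfyBall (mem_insert_self _ _)
      · rcases hAsplit z hzA with hz₁ | rfl
        · exact hWBall (mem_union_left _ (hA₁e₀ hz₁))
        · exact hWBall (mem_union_right _ ha₃fx)

end Witness

section Families
variable {α : Type*} [Fintype α]
open Finset

noncomputable def fam1 (H : Finset (Finset α)) (N : ℕ) : Finset (Finset α) :=
  H.biUnion fun e₀ => (Ball H (Ball H e₀)).powersetCard N

noncomputable def fam2 (H : Finset (Finset α)) : Finset (Finset α) :=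
  ((H ×ˢ H).filter fun q => (q.1 ∩ q.2).Nonempty).biUnion
    fun q => (Ball H (q.1 ∪ q.2)).powersetCard 7

lemma card_powersetCard_le (X : Finset α) (N M : ℕ) (hM : X.card ≤ M) :
    (X.powersetCard N).card ≤ 2 ^ M := by
  have h1 : X.powersetCard N ⊆ X.powerset := fun t ht =>
    mem_powerset.mpr (mem_powersetCard.mp ht).1
  refine le_trans (card_le_card h1) ?_
  rw [card_powerset]
  exact Nat.pow_le_pow_right (by norm_num) hM

lemma mem_fam1 {H : Finset (Finset α)} {N : ℕ} {S e₀ : Finset α} (he₀ : e₀ ∈ H)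
    (hS : S ⊆ Ball H (Ball H e₀)) (hcard : S.card = N) : S ∈ fam1 H N :=
  mem_biUnion.mpr ⟨e₀, he₀, mem_powersetCard.mpr ⟨hS, hcard⟩⟩

lemma mem_fam2 {H : Finset (Finset α)} {S e₀ e₁ : Finset α} (he₀ : e₀ ∈ H) (he₁ : e₁ ∈ H)
    (hne : (e₀ ∩ e₁).Nonempty) (hS : S ⊆ Ball H (e₀ ∪ e₁)) (hcard : S.card = 7) :
    S ∈ fam2 H :=
  mem_biUnion.mpr ⟨(e₀, e₁), mem_filter.mpr ⟨mem_product.mpr ⟨he₀, he₁⟩, hne⟩,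
    mem_powersetCard.mpr ⟨hS, hcard⟩⟩

lemma card_fam1_mem {H : Finset (Finset α)} {N : ℕ} {S : Finset α} (hS : S ∈ fam1 H N) :
    S.card = N := by
  obtain ⟨e₀, _, hS⟩ := mem_biUnion.mp hS
  exact (mem_powersetCard.mp hS).2

lemma card_fam2_mem {H : Finset (Finset α)} {S : Finset α} (hS : S ∈ fam2 H) :
    S.card = 7 := by
  obtain ⟨q, _, hS⟩ := mem_biUnion.mp hS
  exact (mem_powersetCard.mp hS).2

lemma card_Ball_le' {H : Finset (Finset α)} {W : Finset α} {M C s : ℕ}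
    (hW : W.card ≤ M) (hC : maxDeg H 2 ≤ C) (hs : ∀ e ∈ H, e.card ≤ s) :
    (Ball H W).card ≤ M + M ^ 2 * C * s := by
  refine le_trans (card_Ball_le H W s hs) ?_
  exact Nat.add_le_add hW (Nat.mul_le_mul (Nat.mul_le_mul (Nat.pow_le_pow_left hW 2) hC)
    (le_refl _))

lemma card_fam1_le {H : Finset (Finset α)} {N s C : ℕ} (hC : maxDeg H 2 ≤ C)
    (hs : ∀ e ∈ H, e.card ≤ s) (h2 : ∀ e ∈ H, 2 ≤ e.card) :
    (fam1 H N).card ≤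
      (Fintype.card α) ^ 2 * C *
        2 ^ ((s + s ^ 2 * C * s) + (s + s ^ 2 * C * s) ^ 2 * C * s) := by
  set M₁ := s + s ^ 2 * C * s with hM₁
  set M₂ := M₁ + M₁ ^ 2 * C * s with hM₂
  have hball : ∀ e₀ ∈ H, (Ball H (Ball H e₀)).card ≤ M₂ := by
    intro e₀ he₀
    have h1 : (Ball H e₀).card ≤ M₁ := card_Ball_le' (hs e₀ he₀) hC hs
    exact card_Ball_le' h1 hC hs
  refine le_trans card_biUnion_le ?_
  refine le_trans (Finset.sum_le_card_nsmul _ _ (2 ^ M₂)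
    (fun e₀ he₀ => card_powersetCard_le _ _ _ (hball e₀ he₀))) ?_
  rw [smul_eq_mul]
  refine Nat.mul_le_mul ?_ (le_refl _)
  calc H.card ≤ (Fintype.card α) ^ 2 * maxDeg H 2 := card_edges_le H h2
    _ ≤ (Fintype.card α) ^ 2 * C := Nat.mul_le_mul (le_refl _) hC

lemma card_pairs_le {H : Finset (Finset α)} {s C : ℕ} (hC : maxDeg H 2 ≤ C)
    (hs : ∀ e ∈ H, e.card ≤ s) (h2 : ∀ e ∈ H, 2 ≤ e.card) :
    ((H ×ˢ H).filter fun q => (q.1 ∩ q.2).Nonempty).card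
      ≤ ((Fintype.card α) ^ 2 * C) * (s * (Fintype.card α * C)) := by
  have hsub : ((H ×ˢ H).filter fun q => (q.1 ∩ q.2).Nonempty) ⊆
      H.biUnion fun e₀ => (H.filter fun e => (e ∩ e₀).Nonempty).image fun e => (e₀, e) := by
    intro q hq
    rw [mem_filter, mem_product] at hq
    refine mem_biUnion.mpr ⟨q.1, hq.1.1, ?_⟩
    refine mem_image.mpr ⟨q.2, mem_filter.mpr ⟨hq.1.2, ?_⟩, rfl⟩
    rw [inter_comm]
    exact hq.2
  refine le_trans (card_le_card hsub) (le_trans card_biUnion_le ?_)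
  refine le_trans (Finset.sum_le_card_nsmul _ _ (s * (Fintype.card α * C))
    (fun e₀ he₀ => ?_)) ?_
  · refine le_trans card_image_le ?_
    refine le_trans (card_D1_le H h2 e₀) ?_
    exact Nat.mul_le_mul (hs e₀ he₀) (Nat.mul_le_mul (le_refl _) hC)
  · rw [smul_eq_mul]
    refine Nat.mul_le_mul ?_ (le_refl _)
    calc H.card ≤ (Fintype.card α) ^ 2 * maxDeg H 2 := card_edges_le H h2
      _ ≤ (Fintype.card α) ^ 2 * C := Nat.mul_le_mul (le_refl _) hC

lemma card_fam2_le {H : Finset (Finset α)} {s C : ℕ} (hC : maxDeg H 2 ≤ C)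
    (hs : ∀ e ∈ H, e.card ≤ s) (h2 : ∀ e ∈ H, 2 ≤ e.card) :
    (fam2 H).card ≤ ((Fintype.card α) ^ 2 * C) * (s * (Fintype.card α * C)) *
      2 ^ ((s + s) + (s + s) ^ 2 * C * s) := by
  refine le_trans card_biUnion_le ?_
  refine le_trans (Finset.sum_le_card_nsmul _ _ (2 ^ ((s + s) + (s + s) ^ 2 * C * s))
    (fun q hq => ?_)) ?_
  · rw [mem_filter, mem_product] at hq
    refine card_powersetCard_le _ _ _ ?_
    refine card_Ball_le' ?_ hC hs
    exact le_trans (card_union_le _ _) (Nat.add_le_add (hs _ hq.1.1) (hs _ hq.1.2))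
  · rw [smul_eq_mul]
    exact Nat.mul_le_mul (card_pairs_le hC hs h2) (le_refl _)

end Families

section Asymptotics
open Filter Real

lemma term_tendsto (s : ℕ) (hs : 3 ≤ s) (V : ℕ → Type) [∀ n, Fintype (V n)]
    (hv : Tendsto (fun n => Fintype.card (V n)) atTop atTop)
    (p : ℕ → ℝ) (hp0 : ∀ n, 0 ≤ p n) (C : ℝ)
    (hpC : ∀ n, p n ≤ C * (Fintype.card (V n) : ℝ) ^ (-(1 / ((s : ℝ) - 1))))
    (K : ℝ) (hK : 0 ≤ K) (a N : ℕ) (hexp : a * (s - 1) < N) :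
    Tendsto (fun n => K * (Fintype.card (V n) : ℝ) ^ a * p n ^ N) atTop (nhds 0) := by
  have hs1 : (0 : ℝ) < (s : ℝ) - 1 := by
    have : (3 : ℝ) ≤ (s : ℝ) := by exact_mod_cast hs
    linarith
  set ε : ℝ := 1 / ((s : ℝ) - 1) with hεdef
  have hε : 0 < ε := by positivity
  set r : ℝ := (a : ℝ) - (N : ℝ) * ε with hrdef
  have hr : r < 0 := by
    have hcast : (a : ℝ) * ((s : ℝ) - 1) < (N : ℝ) := by
      have h1 : ((a * (s - 1) : ℕ) : ℝ) < ((N : ℕ) : ℝ) := by exact_mod_cast hexp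
      have h2 : ((s - 1 : ℕ) : ℝ) = (s : ℝ) - 1 := by
        have : 1 ≤ s := by omega
        push_cast [this]
        ring
      rw [Nat.cast_mul, h2] at h1
      exact h1
    have : (a : ℝ) < (N : ℝ) * ε := by
      rw [hεdef, mul_one_div, lt_div_iff₀ hs1]
      exact hcast
    linarith
  set D : ℝ := max C 0 with hD
  have hD0 : 0 ≤ D := le_max_right _ _
  have hg : Tendsto (fun n => (K * D ^ N) * ((Fintype.card (V n) : ℝ)) ^ r)
      atTop (nhds 0) := by
    have hvr : Tendsto (fun n => ((Fintype.card (V n) : ℕ) : ℝ)) atTop atTop :=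
      tendsto_natCast_atTop_atTop.comp hv
    have hrp : Tendsto (fun x : ℝ => x ^ r) atTop (nhds 0) := by
      have := tendsto_rpow_neg_atTop (y := -r) (by linarith)
      simpa using this
    have := (hrp.comp hvr).const_mul (K * D ^ N)
    simpa using this
  refine squeeze_zero' ?_ ?_ hg
  · filter_upwards with n
    exact mul_nonneg (mul_nonneg hK (pow_nonneg (Nat.cast_nonneg _) _))
      (pow_nonneg (hp0 n) _)
  · filter_upwards [hv.eventually_ge_atTop 1] with n hn
    set v : ℝ := (Fintype.card (V n) : ℝ) with hvdef
    have hv1 : (1 : ℝ) ≤ v := by rw [hvdef]; exact_mod_cast hn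
    have hv0 : (0 : ℝ) < v := by linarith
    have hvne : v ^ (-ε) > 0 := Real.rpow_pos_of_pos hv0 _
    have hpn : p n ≤ D * v ^ (-ε) := by
      refine le_trans (hpC n) ?_
      exact mul_le_mul_of_nonneg_right (le_max_left _ _) (le_of_lt hvne)
    have hpow : p n ^ N ≤ (D * v ^ (-ε)) ^ N := pow_le_pow_left₀ (hp0 n) hpn N
    have key : (D * v ^ (-ε)) ^ N = D ^ N * v ^ (-ε * (N : ℝ)) := by
      rw [mul_pow, Real.rpow_mul (le_of_lt hv0), Real.rpow_natCast]
    have keyv : v ^ a = v ^ ((a : ℝ)) := (Real.rpow_natCast v a).symm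
    calc K * v ^ a * p n ^ N ≤ K * v ^ a * (D ^ N * v ^ (-ε * (N : ℝ))) := by
          refine mul_le_mul_of_nonneg_left (le_trans hpow (le_of_eq key)) ?_
          exact mul_nonneg hK (pow_nonneg (le_of_lt hv0) _)
      _ = (K * D ^ N) * (v ^ ((a : ℝ)) * v ^ (-ε * (N : ℝ))) := by
          rw [keyv]; ring
      _ = (K * D ^ N) * v ^ r := by
          rw [← Real.rpow_add hv0]
          congr 1
          rw [hrdef]
          ring

end Asymptotics

/-- **No clots appear below the threshold.** If `s ≥ 3`, `(𝓗_n)` is a sequence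
of `s`-uniform hypergraphs with `v(𝓗_n) → ∞` and `Δ₂(𝓗_n) = O(1)`, and
`p_n = O(v(𝓗_n)^{−1/(s−1)})`, then a.a.s. `V(𝓗_n)_{p_n}` contains no clot. -/
theorem no_clots (s : ℕ) (hs : 3 ≤ s)
    (V : ℕ → Type) [∀ n, Fintype (V n)] (H : ∀ n, Finset (Finset (V n)))
    (hunif : ∀ n, ∀ e ∈ H n, e.card = s)
    (hv : Tendsto (fun n => Fintype.card (V n)) atTop atTop)
    (hΔ : ∃ C : ℕ, ∀ n, maxDeg (H n) 2 ≤ C)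
    (p : ℕ → ℝ) (hp : ∀ n, p n ∈ Set.Icc (0 : ℝ) 1)
    (hpO : ∃ C : ℝ, ∀ n, p n ≤ C * (Fintype.card (V n) : ℝ) ^ (-(1 / ((s : ℝ) - 1)))) :
    Tendsto (fun n => probSub (Finset.univ : Finset (V n)) (p n)
      (fun U => ContainsClot s (H n) U)) atTop (nhds 0) := by
  classical
  obtain ⟨C₂, hC₂⟩ := hΔ
  obtain ⟨C, hpC⟩ := hpO
  have hp0 : ∀ n, 0 ≤ p n := fun n => (hp n).1
  have hp1 : ∀ n, p n ≤ 1 := fun n => (hp n).2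
  have hsle : ∀ n, ∀ e ∈ H n, e.card ≤ s := fun n e he => le_of_eq (hunif n e he)
  have h2 : ∀ n, ∀ e ∈ H n, 2 ≤ e.card := fun n e he => by rw [hunif n e he]; omega
  set M₂ : ℕ := (s + s ^ 2 * C₂ * s) + (s + s ^ 2 * C₂ * s) ^ 2 * C₂ * s with hM₂def
  set K₁ : ℝ := ((C₂ * 2 ^ M₂ : ℕ) : ℝ) with hK₁def
  have hK₁0 : 0 ≤ K₁ := Nat.cast_nonneg _
  -- bound for family 1 with any N
  have hfam1R : ∀ (N : ℕ) (n : ℕ), ((fam1 (H n) N).card : ℝ)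
      ≤ K₁ * ((Fintype.card (V n) : ℝ)) ^ 2 := by
    intro N n
    have hb := card_fam1_le (H := H n) (N := N) (s := s) (C := C₂)
      (hC₂ n) (hsle n) (h2 n)
    calc ((fam1 (H n) N).card : ℝ)
        ≤ (((Fintype.card (V n)) ^ 2 * C₂ * 2 ^ M₂ : ℕ) : ℝ) := by exact_mod_cast hb
      _ = K₁ * ((Fintype.card (V n) : ℝ)) ^ 2 := by
          rw [hK₁def]; push_cast; ring
  -- bound probSub by the family-1 count for appropriate N
  have hbound1 : ∀ (N : ℕ) (n : ℕ),
      (∀ U : Finset (V n), ContainsClot s (H n) U → ∃ S ∈ fam1 (H n) N, S ⊆ U) →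
      probSub (Finset.univ : Finset (V n)) (p n) (fun U => ContainsClot s (H n) U)
        ≤ K₁ * ((Fintype.card (V n) : ℝ)) ^ 2 * p n ^ N := by
    intro N n hw
    refine le_trans (probSub_le_card_mul_pow (hp0 n) (hp1 n) _ (fam1 (H n) N) N
      (fun S hS => le_of_eq (card_fam1_mem hS).symm) hw) ?_
    exact mul_le_mul_of_nonneg_right (hfam1R N n) (pow_nonneg (hp0 n) _)
  rcases eq_or_lt_of_le hs with hs3 | hs4
  · -- s = 3
    subst hs3
    set M₃ : ℕ := (3 + 3) + (3 + 3) ^ 2 * C₂ * 3 with hM₃def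
    set K₂ : ℝ := ((C₂ * (3 * C₂) * 2 ^ M₃ : ℕ) : ℝ) with hK₂def
    have hK₂0 : 0 ≤ K₂ := Nat.cast_nonneg _
    have hfam2R : ∀ n : ℕ, ((fam2 (H n)).card : ℝ)
        ≤ K₂ * ((Fintype.card (V n) : ℝ)) ^ 3 := by
      intro n
      have hb := card_fam2_le (H := H n) (s := 3) (C := C₂) (hC₂ n) (hsle n) (h2 n)
      calc ((fam2 (H n)).card : ℝ)
          ≤ ((((Fintype.card (V n)) ^ 2 * C₂) * (3 * (Fintype.card (V n) * C₂)) *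
              2 ^ M₃ : ℕ) : ℝ) := by exact_mod_cast hb
        _ = K₂ * ((Fintype.card (V n) : ℝ)) ^ 3 := by
            rw [hK₂def]; push_cast; ring
    have hsplit : ∀ n, probSub (Finset.univ : Finset (V n)) (p n)
        (fun U => ContainsClot 3 (H n) U)
        ≤ K₁ * ((Fintype.card (V n) : ℝ)) ^ 2 * p n ^ 5
          + K₂ * ((Fintype.card (V n) : ℝ)) ^ 3 * p n ^ 7 := by
      intro n
      have hOr : ∀ U : Finset (V n), ContainsClot 3 (H n) U →
          (∃ S ∈ fam1 (H n) 5, S ⊆ U) ∨ (∃ S ∈ fam2 (H n), S ⊆ U) := by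
        intro U hU
        rcases witness_3 hU with ⟨S, hSU, hScard, e₀, he₀, hSB⟩ |
          ⟨S, hSU, hScard, e₀, he₀, e₁, he₁, hne, hSB⟩
        · exact Or.inl ⟨S, mem_fam1 he₀ hSB hScard, hSU⟩
        · exact Or.inr ⟨S, mem_fam2 he₀ he₁ hne hSB hScard, hSU⟩
      refine le_trans (probSub_or_le (hp0 n) (hp1 n) hOr) ?_
      refine add_le_add ?_ ?_
      · refine le_trans (probSub_le_card_mul_pow (hp0 n) (hp1 n) _ (fam1 (H n) 5) 5
          (fun S hS => le_of_eq (card_fam1_mem hS).symm) (fun U hU => hU)) ?_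
        exact mul_le_mul_of_nonneg_right (hfam1R 5 n) (pow_nonneg (hp0 n) _)
      · refine le_trans (probSub_le_card_mul_pow (hp0 n) (hp1 n) _ (fam2 (H n)) 7
          (fun S hS => le_of_eq (card_fam2_mem hS).symm) (fun U hU => hU)) ?_
        exact mul_le_mul_of_nonneg_right (hfam2R n) (pow_nonneg (hp0 n) _)
    have ht1 := term_tendsto 3 (le_refl 3) V hv p hp0 C hpC K₁ hK₁0 2 5 (by norm_num)
    have ht2 := term_tendsto 3 (le_refl 3) V hv p hp0 C hpC K₂ hK₂0 3 7 (by norm_num)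
    have hg := ht1.add ht2
    rw [add_zero] at hg
    refine squeeze_zero (fun n => probSub_nonneg (hp0 n) (hp1 n) _) hsplit hg
  · -- 4 ≤ s
    have hs4' : 4 ≤ s := hs4
    have hsplit : ∀ n, probSub (Finset.univ : Finset (V n)) (p n)
        (fun U => ContainsClot s (H n) U)
        ≤ K₁ * ((Fintype.card (V n) : ℝ)) ^ 2 * p n ^ (2 * s - 1) := by
      intro n
      refine hbound1 (2 * s - 1) n ?_
      intro U hU
      obtain ⟨S, hSU, hScard, e₀, he₀, hSB⟩ := witness_ge4 hs4' hU
      exact ⟨S, mem_fam1 he₀ hSB hScard, hSU⟩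
    have ht1 := term_tendsto s hs V hv p hp0 C hpC K₁ hK₁0 2 (2 * s - 1) (by omega)
    refine squeeze_zero (fun n => probSub_nonneg (hp0 n) (hp1 n) _) hsplit ht1
end
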